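/- arXiv:2208.09313 — 6 statements merged into one kernel-verified Lean document; each statement's English description precedes it below -/
import Mathlib

section
/- Let k ≥ 2 be an integer and let D be a digraph of order n ≥ 80k. If δ⁰(D) ≥ ⌈(n+k−1)/2⌉, then D is one-to-many k-linked: for any disjoint vertex subsets S = {s} and T = {t₁, …, t_k} of V(D), there exists a set of k directed paths P₁, …, P_k such that each P_i goes from s to t_i and V(P_i) ∩ V(P_j) = {s} for all i ≠ j. -/
/-- A digraph (given by its arc relation `A`) is *semicomplete* if for every pair of
distinct vertices there is at least one arc between them. -/
def Semicomplete {V : Type*} (A : V → V → Prop) : Prop :=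
  ∀ x y : V, x ≠ y → A x y ∨ A y x

/-- `p` is a directed path from `s` to `t` in the digraph with arc relation `A`,
encoded as a nonempty list of distinct vertices in which consecutive vertices
are joined by arcs. -/
def IsDipath {V : Type*} (A : V → V → Prop) (p : List V) (s t : V) : Prop :=
  p ≠ [] ∧ p.Nodup ∧ p.Chain' A ∧ p.head? = some s ∧ p.getLast? = some t

/-- An `S`-`T` path system: `k` directed paths `P i`, where `P i` goes from `s`
to `t i`, and any two distinct paths meet exactly in `s`. -/
def IsSTSystem {V : Type*} (A : V → V → Prop) {k : ℕ} (s : V) (t : Fin k → V)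
    (P : Fin k → List V) : Prop :=
  (∀ i, IsDipath A (P i) s (t i)) ∧
  ∀ i j, i ≠ j → ∀ v, v ∈ P i → v ∈ P j → v = s

/-- The set of vertices covered by a path system. -/
def coverSet {V : Type*} {k : ℕ} (P : Fin k → List V) : Set V := {v | ∃ i, v ∈ P i}

set_option linter.unusedSectionVars false

open List
namespace MengerAux

variable {V : Type*} [DecidableEq V]

@[simp] lemma chain'_nil {R : V → V → Prop} : ([] : List V).Chain' R := isChain_nil

@[simp] lemma chain'_singleton {R : V → V → Prop} (a : V) : [a].Chain' R := isChain_singleton a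

lemma chain'_cons {R : V → V → Prop} {a b : V} {l : List V} :
    (a :: b :: l).Chain' R ↔ R a b ∧ (b :: l).Chain' R := isChain_cons_cons

lemma chain'_cons' {R : V → V → Prop} {x : V} {l : List V} :
    (x :: l).Chain' R ↔ (∀ y ∈ head? l, R x y) ∧ l.Chain' R := isChain_cons

lemma chain'_append {R : V → V → Prop} {l₁ l₂ : List V} :
    (l₁ ++ l₂).Chain' R ↔ l₁.Chain' R ∧ l₂.Chain' R ∧
      ∀ x ∈ l₁.getLast?, ∀ y ∈ l₂.head?, R x y := isChain_append

/-- Truncate a list at the first element belonging to `W`. -/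
def firstCut (W : Finset V) : List V → List V
  | [] => []
  | a :: l => if a ∈ W then [a] else a :: firstCut W l

lemma firstCut_prefix (W : Finset V) : ∀ p : List V, firstCut W p <+: p
  | [] => by simp [firstCut]
  | a :: l => by
    by_cases h : a ∈ W
    · simp [firstCut, h]
    · simp only [firstCut, if_neg h]
      exact (cons_prefix_cons).2 ⟨rfl, firstCut_prefix W l⟩

lemma head?_firstCut (W : Finset V) : ∀ p : List V, (firstCut W p).head? = p.head?
  | [] => rfl
  | a :: l => by by_cases h : a ∈ W <;> simp [firstCut, h]

lemma mem_of_mem_firstCut {W : Finset V} {p : List V} {v : V} (h : v ∈ firstCut W p) : v ∈ p :=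
  (firstCut_prefix W p).sublist.mem h

lemma firstCut_getLast?_mem {W : Finset V} :
    ∀ {p : List V}, (∃ v ∈ p, v ∈ W) → ∃ b, (firstCut W p).getLast? = some b ∧ b ∈ W
  | [], h => by simp at h
  | a :: l, h => by
    by_cases ha : a ∈ W
    · exact ⟨a, by simp [firstCut, ha], ha⟩
    · have hl : ∃ v ∈ l, v ∈ W := by
        obtain ⟨v, hv, hvW⟩ := h
        rcases mem_cons.1 hv with rfl | hv
        · exact absurd hvW ha
        · exact ⟨v, hv, hvW⟩
      obtain ⟨b, hb, hbW⟩ := firstCut_getLast?_mem hl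
      refine ⟨b, ?_, hbW⟩
      have hne : firstCut W l ≠ [] := by
        intro hnil; rw [hnil] at hb; simp at hb
      simp only [firstCut, if_neg ha]
      rw [getLast?_cons, hb]
      simp

lemma firstCut_eq_last {W : Finset V} :
    ∀ {p : List V} {v : V}, v ∈ firstCut W p → v ∈ W → (firstCut W p).getLast? = some v
  | [], v, hv, _ => by simp [firstCut] at hv
  | a :: l, v, hv, hvW => by
    by_cases ha : a ∈ W
    · simp only [firstCut, if_pos ha] at hv ⊢
      simp at hv; simp [hv]
    · simp only [firstCut, if_neg ha] at hv ⊢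
      rcases mem_cons.1 hv with rfl | hv
      · exact absurd hvW ha
      · have := firstCut_eq_last hv hvW
        have hne : firstCut W l ≠ [] := by intro hnil; rw [hnil] at hv; simp at hv
        rw [getLast?_cons, this]; simp

lemma firstCut_nodup {W : Finset V} {p : List V} (h : p.Nodup) : (firstCut W p).Nodup :=
  (firstCut_prefix W p).sublist.nodup h

lemma firstCut_chain' {W : Finset V} {R : V → V → Prop} {p : List V} (h : p.Chain' R) :
    (firstCut W p).Chain' R :=
  h.prefix (firstCut_prefix W p)

/-- Truncate a list to the suffix starting at the last element belonging to `W`. -/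
def lastCut (W : Finset V) (p : List V) : List V := (firstCut W p.reverse).reverse

lemma lastCut_suffix (W : Finset V) (p : List V) : lastCut W p <:+ p := by
  rw [← reverse_prefix]
  simpa [lastCut] using firstCut_prefix W p.reverse

lemma mem_of_mem_lastCut {W : Finset V} {p : List V} {v : V} (h : v ∈ lastCut W p) : v ∈ p :=
  (lastCut_suffix W p).sublist.mem h

lemma getLast?_lastCut (W : Finset V) (p : List V) : (lastCut W p).getLast? = p.getLast? := by
  rw [lastCut, getLast?_reverse, head?_firstCut, head?_reverse]

lemma lastCut_head?_mem {W : Finset V} {p : List V} (h : ∃ v ∈ p, v ∈ W) :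
    ∃ b, (lastCut W p).head? = some b ∧ b ∈ W := by
  have h' : ∃ v ∈ p.reverse, v ∈ W := by simpa using h
  obtain ⟨b, hb, hbW⟩ := firstCut_getLast?_mem h'
  exact ⟨b, by rw [lastCut, head?_reverse, hb], hbW⟩

lemma lastCut_eq_head {W : Finset V} {p : List V} {v : V} (hv : v ∈ lastCut W p) (hvW : v ∈ W) :
    (lastCut W p).head? = some v := by
  rw [lastCut, head?_reverse]
  exact firstCut_eq_last (by simpa [lastCut] using hv) hvW

lemma lastCut_nodup {W : Finset V} {p : List V} (h : p.Nodup) : (lastCut W p).Nodup :=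
  (lastCut_suffix W p).sublist.nodup h

lemma lastCut_chain' {W : Finset V} {R : V → V → Prop} {p : List V} (h : p.Chain' R) :
    (lastCut W p).Chain' R :=
  h.suffix (lastCut_suffix W p)

/-- A prefix of a nodup list containing the last element is the whole list. -/
lemma prefix_getLast {p l : List V} (hpre : l <+: p) (hnd : p.Nodup) {v : V}
    (hv : p.getLast? = some v) (hvl : v ∈ l) : l.getLast? = some v := by
  obtain ⟨r, rfl⟩ := hpre
  rcases eq_or_ne r [] with rfl | hr
  · simpa using hv
  · rw [getLast?_append] at hv
    have : r.getLast? = some v := by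
      rcases hx : r.getLast? with _ | x
      · exact absurd hx (by simp [hr, getLast?_eq_none_iff])
      · rw [hx] at hv; simpa using hv
    have hvr : v ∈ r := mem_of_mem_getLast? (by rw [this]; simp)
    exact absurd hvl (by
      have := (nodup_append.1 hnd).2.2
      exact fun hvl' => this _ hvl' _ hvr rfl)

lemma suffix_head {p l : List V} (hsuf : l <:+ p) (hnd : p.Nodup) {v : V}
    (hv : p.head? = some v) (hvl : v ∈ l) : l.head? = some v := by
  obtain ⟨r, rfl⟩ := hsuf
  rcases eq_or_ne r [] with rfl | hr
  · simpa using hv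
  · rw [head?_append] at hv
    have : r.head? = some v := by
      rcases hx : r.head? with _ | x
      · exact absurd hx (by simp [hr, head?_eq_none_iff])
      · rw [hx] at hv; simpa using hv
    have hvr : v ∈ r := mem_of_mem_head? (by rw [this]; simp)
    exact absurd hvl (by
      have := (nodup_append.1 hnd).2.2
      exact fun hvl' => this _ hvr _ hvl' rfl)

lemma head?_dropWhile_ne {a : V} : ∀ {l : List V}, a ∈ l →
    (l.dropWhile (fun v => v ≠ a)).head? = some a
  | b :: t, h => by
    by_cases hb : b = a
    · subst hb; simp [dropWhile_cons]
    · have hat : a ∈ t := by rcases mem_cons.1 h with h' | h'; exact absurd h'.symm hb; exact h'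
      rw [dropWhile_cons, if_pos (by simp [hb])]
      exact head?_dropWhile_ne hat

/-- Extract a nodup path from a walk, preserving endpoints. -/
lemma extract_path {R : V → V → Prop} (w : List V) (hch : w.Chain' R) :
    ∃ p : List V, p.Nodup ∧ p.Chain' R ∧ p.head? = w.head? ∧ p.getLast? = w.getLast? ∧
      ∀ v ∈ p, v ∈ w := by
  suffices H : ∀ (n : ℕ) (w : List V), w.Chain' R → w.length = n →
      ∃ p : List V, p.Nodup ∧ p.Chain' R ∧ p.head? = w.head? ∧ p.getLast? = w.getLast? ∧
      ∀ v ∈ p, v ∈ w from H w.length w hch rfl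
  intro n
  induction n using Nat.strong_induction_on with
  | _ n IH =>
  intro w hch hn
  subst hn
  match w, hch with
  | [], _ => exact ⟨[], by simp⟩
  | a :: l, hch =>
    by_cases ha : a ∈ l
    · set w' := l.dropWhile (fun v => v ≠ a) with hw'
      have hsuf : w' <:+ l := dropWhile_suffix _
      have hlen : w'.length < (a :: l).length :=
        Nat.lt_succ_of_le (hsuf.sublist.length_le)
      have hhead : w'.head? = some a := head?_dropWhile_ne ha
      have hne : w' ≠ [] := by intro h; rw [h] at hhead; simp at hhead
      have hlne : l ≠ [] := by rintro rfl; simp at ha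
      have hch' : w'.Chain' R := (hch.tail).suffix hsuf
      obtain ⟨p, hnd, hpch, hph, hpl, hpm⟩ := IH w'.length hlen w' hch' rfl
      refine ⟨p, hnd, hpch, ?_, ?_, fun v hv => mem_cons_of_mem a (hsuf.sublist.mem (hpm v hv))⟩
      · rw [hph, hhead]; simp
      · rw [hpl]
        have h1 : w'.getLast? = l.getLast? := by
          obtain ⟨r, hr⟩ := hsuf
          rw [← hr, getLast?_append]
          rcases hx : w'.getLast? with _ | x
          · exact absurd (getLast?_eq_none_iff.1 hx) hne
          · simp
        rw [h1, getLast?_cons]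
        rcases hx : l.getLast? with _ | x
        · exact absurd (getLast?_eq_none_iff.1 hx) hlne
        · simp
    · rcases eq_or_ne l [] with rfl | hlne
      · exact ⟨[a], by simp⟩
      · obtain ⟨p, hnd, hpch, hph, hpl, hpm⟩ := IH l.length (by simp) l hch.tail rfl
        have hpa : a ∉ p := fun h => ha (hpm a h)
        refine ⟨a :: p, hnd.cons hpa, ?_, by simp, ?_, ?_⟩
        · rw [chain'_cons']
          refine ⟨fun y hy => ?_, hpch⟩
          rw [hph] at hy
          exact (chain'_cons'.1 hch).1 y hy
        · have hpne : p ≠ [] := by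
            intro h; rw [h] at hph; simp at hph
            exact hlne (head?_eq_none_iff.1 hph.symm)
          rw [getLast?_cons, hpl, getLast?_cons]
        · intro v hv
          rcases mem_cons.1 hv with rfl | hv
          · exact mem_cons_self
          · exact mem_cons_of_mem a (hpm v hv)

lemma chain'_erase_fst {E : Finset (V × V)} {x y : V} :
    ∀ {p : List V}, p.Chain' (fun a b => (a, b) ∈ E) → p.Nodup →
      (∀ v ∈ p, v = x → p.getLast? = some v) →
      p.Chain' (fun a b => (a, b) ∈ E.erase (x, y))
  | [], _, _, _ => by simp
  | [a], _, _, _ => by simp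
  | a :: b :: l, hch, hnd, hlast => by
    rw [chain'_cons] at hch ⊢
    refine ⟨Finset.mem_erase.2 ⟨?_, hch.1⟩, ?_⟩
    · intro hab
      have hax : a = x := congrArg Prod.fst hab
      have := hlast a (mem_cons_self) hax
      rw [getLast?_cons_cons] at this
      exact (nodup_cons.1 hnd).1 (mem_of_mem_getLast? (by rw [this]; simp))
    · exact chain'_erase_fst hch.2 (nodup_cons.1 hnd).2
        (fun v hv hvx => by
          have := hlast v (mem_cons_of_mem a hv) hvx
          rwa [getLast?_cons_cons] at this)

lemma chain'_erase_snd {E : Finset (V × V)} {x y : V} :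
    ∀ {p : List V}, p.Chain' (fun a b => (a, b) ∈ E) → p.Nodup →
      (∀ v ∈ p, v = y → p.head? = some v) →
      p.Chain' (fun a b => (a, b) ∈ E.erase (x, y))
  | [], _, _, _ => by simp
  | [a], _, _, _ => by simp
  | a :: b :: l, hch, hnd, hhead => by
    rw [chain'_cons] at hch ⊢
    refine ⟨Finset.mem_erase.2 ⟨?_, hch.1⟩, ?_⟩
    · intro hab
      have hby : b = y := congrArg Prod.snd hab
      have := hhead b (mem_cons_of_mem a (mem_cons_self)) hby
      simp only [head?_cons, Option.some.injEq] at this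
      exact (nodup_cons.1 hnd).1 (this ▸ mem_cons_self)
    · exact chain'_erase_snd hch.2 (nodup_cons.1 hnd).2
        (fun v hv hvy => by
          have := hhead v (mem_cons_of_mem a hv) hvy
          simp only [head?_cons, Option.some.injEq] at this
          exact absurd (this ▸ hv) (nodup_cons.1 hnd).1)

lemma exists_head? {p : List V} (h : p ≠ []) : ∃ a, p.head? = some a := by
  cases p with
  | nil => exact absurd rfl h
  | cons a l => exact ⟨a, rfl⟩

lemma exists_getLast? {p : List V} (h : p ≠ []) : ∃ a, p.getLast? = some a := by
  have := getLast?_eq_none_iff (xs := p)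
  rcases hx : p.getLast? with _ | a
  · exact absurd (this.1 hx) h
  · exact ⟨a, rfl⟩

/-- An `A`–`B` path in the digraph with arc set `E`. -/
def ABP (E : Finset (V × V)) (A B : Finset V) (p : List V) : Prop :=
  p ≠ [] ∧ p.Nodup ∧ p.Chain' (fun a b => (a, b) ∈ E) ∧
    (∀ a, p.head? = some a → a ∈ A) ∧ (∀ b, p.getLast? = some b → b ∈ B)

/-- `S` meets every `A`–`B` path. -/
def Cuts (E : Finset (V × V)) (A B S : Finset V) : Prop :=
  ∀ p, ABP E A B p → ∃ v ∈ S, v ∈ p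

lemma ABP.mono {E E' : Finset (V × V)} {A B : Finset V} {p : List V}
    (hE : E' ⊆ E) (h : ABP E' A B p) : ABP E A B p :=
  ⟨h.1, h.2.1, h.2.2.1.imp (fun a b hab => hE hab), h.2.2.2⟩

lemma chain'_ne_of_nodup {R : V → V → Prop} :
    ∀ {p : List V}, p.Nodup → p.Chain' R → p.Chain' (fun a b => R a b ∧ a ≠ b)
  | [], _, _ => by simp
  | [a], _, _ => by simp
  | a :: b :: l, hnd, hch => by
    rw [chain'_cons] at hch ⊢
    exact ⟨⟨hch.1, fun h => (nodup_cons.1 hnd).1 (h ▸ mem_cons_self)⟩,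
      chain'_ne_of_nodup (nodup_cons.1 hnd).2 hch.2⟩

lemma cross_lemma {E' : Finset (V × V)} {A B S : Finset V} {p q : List V}
    (hS : Cuts E' A B S)
    (hpnd : p.Nodup) (hpch : p.Chain' (fun a b => (a, b) ∈ E'))
    (hpA : ∀ a, p.head? = some a → a ∈ A)
    (hpS : ∀ v ∈ p, v ∈ S → p.getLast? = some v)
    (hqnd : q.Nodup) (hqch : q.Chain' (fun a b => (a, b) ∈ E'))
    (hqB : ∀ b, q.getLast? = some b → b ∈ B)
    (hqS : ∀ v ∈ q, v ∈ S → q.head? = some v)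
    {v : V} (hvp : v ∈ p) (hvq : v ∈ q) :
    v ∈ S ∧ p.getLast? = some v ∧ q.head? = some v := by
  by_cases hvS : v ∈ S
  · exact ⟨hvS, hpS v hvp hvS, hqS v hvq hvS⟩
  exfalso
  set p1 := firstCut {v} p with hp1
  set q1 := lastCut {v} q with hq1
  have hp1last : p1.getLast? = some v := by
    obtain ⟨b, hb, hbW⟩ := firstCut_getLast?_mem (W := {v}) (p := p) ⟨v, hvp, by simp⟩
    rwa [Finset.mem_singleton.1 hbW] at hb
  have hq1head : q1.head? = some v := by
    obtain ⟨b, hb, hbW⟩ := lastCut_head?_mem (W := {v}) (p := q) ⟨v, hvq, by simp⟩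
    rwa [Finset.mem_singleton.1 hbW] at hb
  have hp1ne : p1 ≠ [] := fun h => by rw [h] at hp1last; simp at hp1last
  have hq1ne : q1 ≠ [] := fun h => by rw [h] at hq1head; simp at hq1head
  have hq1struct : q1 = v :: q1.tail := by
    cases hq : q1 with
    | nil => exact absurd hq hq1ne
    | cons b t =>
      rw [hq] at hq1head
      simp only [head?_cons, Option.some.injEq] at hq1head
      simp [hq1head]
  -- the walk
  set w := p1 ++ q1.tail with hw
  have hwch : w.Chain' (fun a b => (a, b) ∈ E') := by
    rw [hw, chain'_append]
    refine ⟨firstCut_chain' hpch, (lastCut_chain' hqch).tail, ?_⟩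
    intro x' hx' y' hy'
    rw [hp1last] at hx'
    have hx'v : v = x' := by simpa using hx'
    subst hx'v
    have hch1 : q1.Chain' (fun a b => (a, b) ∈ E') := lastCut_chain' hqch
    rw [hq1struct, chain'_cons'] at hch1
    exact hch1.1 y' hy'
  have hwhead : w.head? = p.head? := by
    rw [hw, head?_append, head?_firstCut]
    obtain ⟨a, ha⟩ := exists_head? (p := p) (fun h => by subst h; simp at hvp)
    rw [ha]; simp
  have hwlast : ∀ b, w.getLast? = some b → b ∈ B := by
    intro b hb
    rw [hw, getLast?_append] at hb
    rcases ht : q1.tail with _ | ⟨c, t⟩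
    · rw [ht] at hb; simp only [getLast?_nil, Option.none_or] at hb
      rw [hp1last] at hb
      have hbv : v = b := by simpa using hb
      subst hbv
      apply hqB
      rw [← getLast?_lastCut {v} q, ← hq1, hq1struct, ht]
      simp
    · have : q1.tail.getLast? = some b := by
        rw [ht] at hb ⊢
        rcases hx : (c :: t).getLast? with _ | d
        · simp at hx
        · rw [hx] at hb; simpa using hb
      apply hqB
      rw [← getLast?_lastCut {v} q, ← hq1, hq1struct, getLast?_cons, this]
      simp
  have hwS : ∀ u ∈ w, u ∉ S := by
    intro u hu huS
    rw [hw, mem_append] at hu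
    rcases hu with hu | hu
    · have hup : u ∈ p := mem_of_mem_firstCut hu
      have := prefix_getLast (firstCut_prefix {v} p) hpnd (hpS u hup huS) hu
      rw [hp1last] at this
      exact hvS ((Option.some_inj.1 this).symm ▸ huS)
    · have huq1 : u ∈ q1 := by rw [hq1struct]; exact mem_cons_of_mem _ hu
      have huq : u ∈ q := mem_of_mem_lastCut huq1
      have := suffix_head (lastCut_suffix {v} q) hqnd (hqS u huq huS) huq1
      rw [hq1head] at this
      exact hvS ((Option.some_inj.1 this).symm ▸ huS)
  obtain ⟨p', hp'nd, hp'ch, hp'h, hp'l, hp'm⟩ := extract_path w hwch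
  have hp'ne : p' ≠ [] := by
    intro h
    rw [h] at hp'h
    obtain ⟨a, ha⟩ := exists_head? (p := p) (fun h' => by subst h'; simp at hvp)
    rw [hwhead, ha] at hp'h; simp at hp'h
  obtain ⟨u, huS, hup'⟩ := hS p' ⟨hp'ne, hp'nd, hp'ch,
    fun a ha => hpA a (by rw [← hwhead, ← hp'h, ha]),
    fun b hb => hwlast b (by rw [← hp'l, hb])⟩
  exact hwS u (hp'm u hup') huS

theorem menger [Fintype V] (E : Finset (V × V)) : ∀ (A B : Finset V) (k : ℕ),
    (∀ S, Cuts E A B S → k ≤ S.card) →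
    ∃ P : Fin k → List V, (∀ i, ABP E A B (P i)) ∧
      ∀ i j, i ≠ j → ∀ v, v ∈ P i → v ∈ P j → False := by
  induction E using Finset.strongInductionOn with
  | _ E IH =>
  intro A B k hcut
  rcases E.eq_empty_or_nonempty with rfl | ⟨e, he⟩
  · -- no arcs: paths are single vertices in A ∩ B
    have hAB : Cuts ∅ A B (A ∩ B) := by
      intro p hp
      obtain ⟨hne, hnd, hch, hA, hB⟩ := hp
      match p with
      | [a] => exact ⟨a, Finset.mem_inter.2 ⟨hA a rfl, hB a rfl⟩, by simp⟩
      | a :: b :: l => exact absurd (chain'_cons.1 hch).1 (by simp)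
    obtain ⟨T, hTsub, hTcard⟩ := Finset.exists_subset_card_eq (hcut _ hAB)
    let eqv := Finset.equivFinOfCardEq hTcard
    refine ⟨fun i => [(eqv.symm i).1], ?_, ?_⟩
    · intro i
      have hm := hTsub (eqv.symm i).2
      exact ⟨by simp, by simp, by simp, fun a ha => by
          simp only [head?_cons, Option.some.injEq] at ha
          exact ha ▸ (Finset.mem_inter.1 hm).1,
        fun b hb => by
          simp only [getLast?_singleton, Option.some.injEq] at hb
          exact hb ▸ (Finset.mem_inter.1 hm).2⟩
    · intro i j hij v hvi hvj
      simp only [mem_singleton] at hvi hvj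
      exact hij (eqv.symm.injective (Subtype.ext (hvi ▸ hvj ▸ rfl)))
  · obtain ⟨x, y⟩ := e
    set E' := E.erase (x, y) with hE'
    have hss : E' ⊂ E := Finset.erase_ssubset he
    by_cases hrem : ∀ S, Cuts E' A B S → k ≤ S.card
    · obtain ⟨P, hP, hdisj⟩ := IH E' hss A B k hrem
      exact ⟨P, fun i => (hP i).mono (Finset.erase_subset _ _), hdisj⟩
    push_neg at hrem
    obtain ⟨S, hScut, hSlt⟩ := hrem
    -- x ≠ y
    have hxy : x ≠ y := by
      intro h
      subst h
      refine absurd (hcut S ?_) (by omega)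
      intro p hp
      obtain ⟨hne, hnd, hch, hA, hB⟩ := hp
      refine hScut p ⟨hne, hnd, ?_, hA, hB⟩
      exact (chain'_ne_of_nodup hnd hch).imp (fun a b hab =>
        Finset.mem_erase.2 ⟨fun h' => hab.2 (by
          have h1 : a = x := congrArg Prod.fst h'
          have h2 : b = x := congrArg Prod.snd h'
          rw [h1, h2]), hab.1⟩)
    -- insert x S and insert y S are cuts of E
    have hCx : Cuts E A B (insert x S) := by
      intro p hp
      obtain ⟨hne, hnd, hch, hA, hB⟩ := hp
      by_cases hxp : x ∈ p
      · exact ⟨x, Finset.mem_insert_self _ _, hxp⟩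
      · obtain ⟨v, hvS, hvp⟩ := hScut p ⟨hne, hnd,
          chain'_erase_fst hch hnd (fun v hv hvx => absurd (hvx ▸ hv) hxp), hA, hB⟩
        exact ⟨v, Finset.mem_insert_of_mem hvS, hvp⟩
    have hCy : Cuts E A B (insert y S) := by
      intro p hp
      obtain ⟨hne, hnd, hch, hA, hB⟩ := hp
      by_cases hyp : y ∈ p
      · exact ⟨y, Finset.mem_insert_self _ _, hyp⟩
      · obtain ⟨v, hvS, hvp⟩ := hScut p ⟨hne, hnd,
          chain'_erase_snd hch hnd (fun v hv hvy => absurd (hvy ▸ hv) hyp), hA, hB⟩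
        exact ⟨v, Finset.mem_insert_of_mem hvS, hvp⟩
    have hxS : x ∉ S := by
      intro hx
      rw [Finset.insert_eq_self.2 hx] at hCx
      exact absurd (hcut S hCx) (by omega)
    have hyS : y ∉ S := by
      intro hy
      rw [Finset.insert_eq_self.2 hy] at hCy
      exact absurd (hcut S hCy) (by omega)
    have hcardS : S.card + 1 = k := by
      have h1 := hcut _ hCx
      rw [Finset.card_insert_of_notMem hxS] at h1
      omega
    -- every A–(insert x S) cut in E' has size ≥ k
    have hcutA : ∀ T, Cuts E' A (insert x S) T → k ≤ T.card := by
      intro T hT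
      apply hcut
      intro p hp
      obtain ⟨hne, hnd, hch, hA, hB⟩ := hp
      obtain ⟨v0, hv0S, hv0p⟩ := hCx p ⟨hne, hnd, hch, hA, hB⟩
      set q := firstCut (insert x S) p with hqdef
      have hqpre := firstCut_prefix (insert x S) p
      have hqh : q.head? = p.head? := head?_firstCut _ _
      have hqne : q ≠ [] := by
        obtain ⟨a, ha⟩ := exists_head? hne
        intro h; rw [h] at hqh; rw [ha] at hqh; simp at hqh
      obtain ⟨b0, hb0, hb0W⟩ := firstCut_getLast?_mem ⟨v0, hv0p, hv0S⟩
      have hqnd : q.Nodup := hqpre.sublist.nodup hnd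
      obtain ⟨u, huT, huq⟩ := hT q ⟨hqne, hqnd,
        chain'_erase_fst (firstCut_chain' hch) hqnd
          (fun v hv hvx => firstCut_eq_last hv (hvx ▸ Finset.mem_insert_self _ _)),
        fun a ha => hA a (hqh ▸ ha),
        fun b hb => by rw [hb0] at hb; exact (Option.some_inj.1 hb) ▸ hb0W⟩
      exact ⟨u, huT, mem_of_mem_firstCut huq⟩
    -- every (insert y S)–B cut in E' has size ≥ k
    have hcutB : ∀ T, Cuts E' (insert y S) B T → k ≤ T.card := by
      intro T hT
      apply hcut
      intro p hp
      obtain ⟨hne, hnd, hch, hA, hB⟩ := hp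
      obtain ⟨v0, hv0S, hv0p⟩ := hCy p ⟨hne, hnd, hch, hA, hB⟩
      set q := lastCut (insert y S) p with hqdef
      have hqsuf := lastCut_suffix (insert y S) p
      have hql : q.getLast? = p.getLast? := getLast?_lastCut _ _
      obtain ⟨b0, hb0, hb0W⟩ := lastCut_head?_mem ⟨v0, hv0p, hv0S⟩
      have hqne : q ≠ [] := by
        intro h
        rw [← hqdef] at hb0
        rw [h] at hb0; simp at hb0
      have hqnd : q.Nodup := hqsuf.sublist.nodup hnd
      obtain ⟨u, huT, huq⟩ := hT q ⟨hqne, hqnd,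
        chain'_erase_snd (lastCut_chain' hch) hqnd
          (fun v hv hvy => lastCut_eq_head hv (hvy ▸ Finset.mem_insert_self _ _)),
        fun a ha => by rw [hb0] at ha; exact (Option.some_inj.1 ha) ▸ hb0W,
        fun b hb => hB b (hql ▸ hb)⟩
      exact ⟨u, huT, mem_of_mem_lastCut huq⟩
    obtain ⟨Pa, hPa, hPadisj⟩ := IH E' hss A (insert x S) k hcutA
    obtain ⟨Pb, hPb, hPbdisj⟩ := IH E' hss (insert y S) B k hcutB
    -- normalize
    set Qa : Fin k → List V := fun i => firstCut (insert x S) (Pa i) with hQadef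
    set Qb : Fin k → List V := fun i => lastCut (insert y S) (Pb i) with hQbdef
    have hQamem : ∀ i v, v ∈ Qa i → v ∈ Pa i := fun i v hv => mem_of_mem_firstCut hv
    have hQbmem : ∀ i v, v ∈ Qb i → v ∈ Pb i := fun i v hv => mem_of_mem_lastCut hv
    have hQand : ∀ i, (Qa i).Nodup := fun i =>
      (firstCut_prefix _ _).sublist.nodup (hPa i).2.1
    have hQbnd : ∀ i, (Qb i).Nodup := fun i =>
      (lastCut_suffix _ _).sublist.nodup (hPb i).2.1
    have hQach : ∀ i, (Qa i).Chain' (fun a b => (a, b) ∈ E') := fun i =>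
      firstCut_chain' (hPa i).2.2.1
    have hQbch : ∀ i, (Qb i).Chain' (fun a b => (a, b) ∈ E') := fun i =>
      lastCut_chain' (hPb i).2.2.1
    have hQahead : ∀ i, (Qa i).head? = (Pa i).head? := fun i => head?_firstCut _ _
    have hQblast : ∀ i, (Qb i).getLast? = (Pb i).getLast? := fun i => getLast?_lastCut _ _
    have hQaA : ∀ i a, (Qa i).head? = some a → a ∈ A := fun i a ha =>
      (hPa i).2.2.2.1 a (hQahead i ▸ ha)
    have hQbB : ∀ i b, (Qb i).getLast? = some b → b ∈ B := fun i b hb =>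
      (hPb i).2.2.2.2 b (hQblast i ▸ hb)
    -- endpoints
    have hlaex : ∀ i, ∃ b, (Qa i).getLast? = some b ∧ b ∈ insert x S := by
      intro i
      have hhit : ∃ v ∈ Pa i, v ∈ insert x S := by
        obtain ⟨b, hb⟩ := exists_getLast? (hPa i).1
        exact ⟨b, mem_of_mem_getLast? (by rw [hb]; simp), (hPa i).2.2.2.2 b hb⟩
      exact firstCut_getLast?_mem hhit
    have hhbex : ∀ i, ∃ b, (Qb i).head? = some b ∧ b ∈ insert y S := by
      intro i
      have hhit : ∃ v ∈ Pb i, v ∈ insert y S := by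
        obtain ⟨b, hb⟩ := exists_head? (hPb i).1
        exact ⟨b, mem_of_mem_head? (by rw [hb]; simp), (hPb i).2.2.2.1 b hb⟩
      exact lastCut_head?_mem hhit
    choose la hla1 hla2 using hlaex
    choose hb hb1 hb2 using hhbex
    have hQane : ∀ i, Qa i ≠ [] := fun i h => by
      have := hla1 i; rw [h] at this; simp at this
    have hQbne : ∀ i, Qb i ≠ [] := fun i h => by
      have := hb1 i; rw [h] at this; simp at this
    have hlamem : ∀ i, la i ∈ Qa i := fun i => mem_of_mem_getLast? (by rw [hla1 i]; simp)
    have hbmem : ∀ i, hb i ∈ Qb i := fun i => mem_of_mem_head? (by rw [hb1 i]; simp)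
    have hlainj : Function.Injective la := by
      intro i j hij
      by_contra hne
      exact hPadisj i j hne (la i) (hQamem i _ (hlamem i)) (hQamem j _ (by rw [hij]; exact hlamem j))
    have hbinj : Function.Injective hb := by
      intro i j hij
      by_contra hne
      exact hPbdisj i j hne (hb i) (hQbmem i _ (hbmem i)) (hQbmem j _ (by rw [hij]; exact hbmem j))
    -- hb is surjective onto insert y S
    have himg : Finset.univ.image hb = insert y S := by
      apply Finset.eq_of_subset_of_card_le
      · intro z hz
        obtain ⟨i, _, rfl⟩ := Finset.mem_image.1 hz
        exact hb2 i
      · rw [Finset.card_image_of_injective _ hbinj, Finset.card_univ, Fintype.card_fin,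
          Finset.card_insert_of_notMem hyS]
        omega
    set f : Fin k → V := fun i => if la i = x then y else la i with hfdef
    have hfmem : ∀ i, f i ∈ insert y S := by
      intro i
      simp only [hfdef]
      split
      · exact Finset.mem_insert_self _ _
      · next h =>
        rcases Finset.mem_insert.1 (hla2 i) with h' | h'
        · exact absurd h' h
        · exact Finset.mem_insert_of_mem h'
    have hfinj : Function.Injective f := by
      intro i j hij
      simp only [hfdef] at hij
      split at hij <;> split at hij
      · next h1 h2 => exact hlainj (h1 ▸ h2 ▸ rfl)
      · next h1 h2 =>
        exfalso
        rcases Finset.mem_insert.1 (hla2 j) with h' | h'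
        · exact h2 h'
        · exact hyS (hij ▸ h')
      · next h1 h2 =>
        exfalso
        rcases Finset.mem_insert.1 (hla2 i) with h' | h'
        · exact h1 h'
        · exact hyS (hij ▸ h')
      · exact hlainj hij
    have hsig : ∀ i, ∃ j, hb j = f i := by
      intro i
      have := hfmem i
      rw [← himg] at this
      obtain ⟨j, _, hj⟩ := Finset.mem_image.1 this
      exact ⟨j, hj⟩
    choose σ hσ using hsig
    have hσinj : Function.Injective σ := by
      intro i j hij
      exact hfinj (hσ i ▸ hσ j ▸ hij ▸ rfl)
    -- the cross lemma
    have cross : ∀ i j v, v ∈ Qa i → v ∈ Qb j →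
        v ∈ S ∧ (Qa i).getLast? = some v ∧ (Qb j).head? = some v := by
      intro i j v hvi hvj
      refine cross_lemma hScut (hQand i) (hQach i) (hQaA i) ?_
        (hQbnd j) (hQbch j) (hQbB j) ?_ hvi hvj
      · intro v' hv' hv'S
        exact firstCut_eq_last hv' (Finset.mem_insert_of_mem hv'S)
      · intro v' hv' hv'S
        exact lastCut_eq_head hv' (Finset.mem_insert_of_mem hv'S)
    -- build the glued paths
    set R : Fin k → List V := fun i =>
      if la i = x then Qa i ++ Qb (σ i) else Qa i ++ (Qb (σ i)).tail with hRdef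
    have hRmem : ∀ i v, v ∈ R i → v ∈ Qa i ∨ v ∈ Qb (σ i) := by
      intro i v hv
      simp only [hRdef] at hv
      split at hv
      · exact (mem_append.1 hv).imp id id
      · exact (mem_append.1 hv).imp id (fun h => mem_of_mem_tail h)
    have hQbσhead : ∀ i, (Qb (σ i)).head? = some (f i) := fun i => hσ i ▸ hb1 (σ i)
    refine ⟨R, ?_, ?_⟩
    · intro i
      by_cases hx : la i = x
      · have hfy : f i = y := by simp [hfdef, hx]
        have hdisj_i : ∀ v, v ∈ Qa i → v ∈ Qb (σ i) → False := by
          intro v hv1 hv2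
          obtain ⟨hvS, hlast, _⟩ := cross i (σ i) v hv1 hv2
          rw [hla1 i] at hlast
          have hvla : la i = v := Option.some_inj.1 hlast
          rw [← hvla, hx] at hvS
          exact hxS hvS
        have hRi : R i = Qa i ++ Qb (σ i) := by simp [hRdef, hx]
        rw [hRi]
        refine ⟨by simp [hQane i], (hQand i).append (hQbnd (σ i)) hdisj_i, ?_, ?_, ?_⟩
        · rw [chain'_append]
          refine ⟨(hQach i).imp (fun a b hab => Finset.erase_subset _ _ hab),
            (hQbch (σ i)).imp (fun a b hab => Finset.erase_subset _ _ hab), ?_⟩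
          intro x' hx' y' hy'
          rw [hla1 i] at hx'
          rw [hQbσhead i, hfy] at hy'
          have h1 : x' = la i := (Option.some_inj.1 (by simpa using hx')).symm
          have h2 : y' = y := (Option.some_inj.1 (by simpa using hy')).symm
          rw [h1, h2, hx]
          exact he
        · intro a ha
          rw [head?_append] at ha
          obtain ⟨a0, ha0⟩ := exists_head? (hQane i)
          rw [ha0] at ha
          exact hQaA i a (by rw [ha0]; simpa using ha)
        · intro b hbx
          rw [getLast?_append] at hbx
          rw [hla1 i] at hbx
          rcases hqb : (Qb (σ i)).getLast? with _ | b0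
          · exact absurd (getLast?_eq_none_iff.1 hqb) (hQbne (σ i))
          · rw [hqb] at hbx
            exact hQbB (σ i) b (by rw [hqb]; simpa using hbx)
      · have hfla : f i = la i := by simp [hfdef, hx]
        have hlaiS : la i ∈ S := by
          rcases Finset.mem_insert.1 (hla2 i) with h' | h'
          · exact absurd h' hx
          · exact h'
        have hQbσh : (Qb (σ i)).head? = some (la i) := by rw [hQbσhead i, hfla]
        have hQbstruct : Qb (σ i) = la i :: (Qb (σ i)).tail := by
          cases hq : Qb (σ i) with
          | nil => exact absurd hq (hQbne (σ i))
          | cons b t =>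
            rw [hq] at hQbσh
            simp only [head?_cons, Option.some.injEq] at hQbσh
            simp [hQbσh]
        have hdisj_i : ∀ v, v ∈ Qa i → v ∈ (Qb (σ i)).tail → False := by
          intro v hv1 hv2
          obtain ⟨hvS, hlast, hhead⟩ := cross i (σ i) v hv1 (mem_of_mem_tail hv2)
          rw [hQbσh] at hhead
          have hvla : v = la i := (Option.some_inj.1 hhead).symm
          subst hvla
          have := hQbnd (σ i)
          rw [hQbstruct] at this
          exact (nodup_cons.1 this).1 hv2
        have hRi : R i = Qa i ++ (Qb (σ i)).tail := by simp [hRdef, hx]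
        rw [hRi]
        refine ⟨by simp [hQane i],
          (hQand i).append ((hQbnd (σ i)).sublist (tail_sublist _)) hdisj_i, ?_, ?_, ?_⟩
        · rw [chain'_append]
          refine ⟨(hQach i).imp (fun a b hab => Finset.erase_subset _ _ hab),
            ((hQbch (σ i)).imp (fun a b hab => Finset.erase_subset _ _ hab)).tail, ?_⟩
          intro x' hx' y' hy'
          rw [hla1 i] at hx'
          have h1 : x' = la i := (Option.some_inj.1 (by simpa using hx')).symm
          have hch1 := (hQbch (σ i)).imp
            (fun a b hab => (Finset.erase_subset _ _ hab : (a, b) ∈ E))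
          rw [hQbstruct, isChain_cons] at hch1
          exact h1 ▸ hch1.1 y' hy'
        · intro a ha
          rw [head?_append] at ha
          obtain ⟨a0, ha0⟩ := exists_head? (hQane i)
          rw [ha0] at ha
          exact hQaA i a (by rw [ha0]; simpa using ha)
        · intro b hbx
          rw [getLast?_append] at hbx
          rcases ht : (Qb (σ i)).tail with _ | ⟨c, t⟩
          · rw [ht] at hbx
            simp only [getLast?_nil, Option.none_or] at hbx
            rw [hla1 i] at hbx
            have hbla : la i = b := Option.some_inj.1 (by simpa using hbx)
            apply hQbB (σ i)
            rw [hQbstruct, ht, ← hbla]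
            simp
          · rw [ht] at hbx
            have h2 : (c :: t).getLast? = some b := by
              rcases hx2 : (c :: t).getLast? with _ | d
              · simp at hx2
              · rw [hx2] at hbx; simpa using hbx
            apply hQbB (σ i)
            rw [hQbstruct, ht, getLast?_cons_cons, h2]
    · intro i j hij v hvi hvj
      rcases hRmem i v hvi with h1 | h1 <;> rcases hRmem j v hvj with h2 | h2
      · exact hPadisj i j hij v (hQamem i v h1) (hQamem j v h2)
      · obtain ⟨hvS, hlast, hhead⟩ := cross i (σ j) v h1 h2
        rw [hla1 i] at hlast
        have hv1 : la i = v := Option.some_inj.1 hlast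
        rw [hQbσhead j] at hhead
        have hv2 : f j = v := Option.some_inj.1 hhead
        by_cases hxj : la j = x
        · have hfy : f j = y := by simp [hfdef, hxj]
          rw [hfy] at hv2
          rw [← hv2] at hvS
          exact hyS hvS
        · have hfl : f j = la j := by simp [hfdef, hxj]
          rw [hfl] at hv2
          exact hij (hlainj (hv1.trans hv2.symm))
      · obtain ⟨hvS, hlast, hhead⟩ := cross j (σ i) v h2 h1
        rw [hla1 j] at hlast
        have hv1 : la j = v := Option.some_inj.1 hlast
        rw [hQbσhead i] at hhead
        have hv2 : f i = v := Option.some_inj.1 hhead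
        by_cases hxi : la i = x
        · have hfy : f i = y := by simp [hfdef, hxi]
          rw [hfy] at hv2
          rw [← hv2] at hvS
          exact hyS hvS
        · have hfl : f i = la i := by simp [hfdef, hxi]
          rw [hfl] at hv2
          exact hij (hlainj (hv2.trans hv1.symm))
      · exact hPbdisj (σ i) (σ j) (fun h => hij (hσinj h)) v (hQbmem _ v h1) (hQbmem _ v h2)

lemma pred_of_chain {P : V → Prop} {R : V → V → Prop} :
    ∀ {q : List V}, q.Chain' R → (∀ a, q.head? = some a → P a) → (∀ a b, R a b → P b) →
      ∀ v ∈ q, P v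
  | [], _, _, _ => by simp
  | a :: l, hch, h1, h2 => by
    intro v hv
    rcases mem_cons.1 hv with rfl | hv
    · exact h1 v rfl
    · cases l with
      | nil => simp at hv
      | cons b t =>
        refine pred_of_chain (hch.tail) (fun a' ha' => ?_) h2 v hv
        simp only [tail_cons, head?_cons, Option.some.injEq] at ha'
        exact ha' ▸ h2 a b (chain'_cons.1 hch).1

end MengerAux

open List MengerAux

theorem stmt_1 {V : Type*} [Fintype V] (A : V → V → Prop)
    (hirr : Irreflexive A)
    (k : ℕ) (hk : 2 ≤ k)
    (hcard : 80 * k ≤ Fintype.card V)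
    (hdeg : ∀ v : V, (Fintype.card V + k) / 2 ≤ {w : V | A v w}.ncard ∧
      (Fintype.card V + k) / 2 ≤ {w : V | A w v}.ncard) :
    ∀ (s : V) (t : Fin k → V), Function.Injective t → (∀ i, t i ≠ s) →
      ∃ P : Fin k → List V, IsSTSystem A s t P := by
  classical
  intro s t hinj hts
  set n := Fintype.card V with hn
  set E : Finset (V × V) := Finset.univ.filter (fun e => A e.1 e.2 ∧ e.1 ≠ s ∧ e.2 ≠ s) with hE
  set As : Finset V := Finset.univ.filter (fun v => A s v) with hAs
  set Bs : Finset V := Finset.univ.image t with hBs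
  have hBcard : Bs.card = k := by
    rw [hBs, Finset.card_image_of_injective _ hinj, Finset.card_univ, Fintype.card_fin]
  have hdegF : ∀ v : V, (n + k) / 2 ≤ (Finset.univ.filter (fun w => A v w)).card ∧
      (n + k) / 2 ≤ (Finset.univ.filter (fun w => A w v)).card := by
    intro v
    have h1 : {w : V | A v w} = ↑(Finset.univ.filter (fun w => A v w)) := by ext w; simp
    have h2 : {w : V | A w v} = ↑(Finset.univ.filter (fun w => A w v)) := by ext w; simp
    have := hdeg v
    rwa [h1, h2, Set.ncard_coe_finset, Set.ncard_coe_finset] at this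
  have harith : (n + k) / 2 + (n + k) / 2 + 2 ≥ n + k + 1 := by
    have h1 := Nat.div_add_mod (n + k) 2
    have h2 : (n + k) % 2 < 2 := Nat.mod_lt _ (by norm_num)
    omega
  -- the cut condition
  have hcut : ∀ S, Cuts E As Bs S → k ≤ S.card := by
    intro S hS
    by_contra hlt
    push_neg at hlt
    have hex : ∃ i, t i ∉ S := by
      by_contra hall
      push_neg at hall
      have hsub : Bs ⊆ S := by
        intro b hb
        obtain ⟨i, _, rfl⟩ := Finset.mem_image.1 hb
        exact hall i
      have := Finset.card_le_card hsub
      omega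
    obtain ⟨i, hiS⟩ := hex
    have htiBs : t i ∈ Bs := by rw [hBs]; exact Finset.mem_image_of_mem t (Finset.mem_univ i)
    by_cases hdir : A s (t i)
    · obtain ⟨v, hvS, hvp⟩ := hS [t i] ⟨by simp, by simp, by simp,
        fun a ha => by
          simp only [head?_cons, Option.some.injEq] at ha
          rw [hAs]
          exact Finset.mem_filter.2 ⟨Finset.mem_univ _, by rw [← ha]; exact hdir⟩,
        fun b hb => by
          simp only [getLast?_singleton, Option.some.injEq] at hb
          exact hb ▸ htiBs⟩
      simp only [mem_singleton] at hvp
      exact hiS (hvp ▸ hvS)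
    · set X : Finset V := Finset.univ.filter (fun w => A s w) with hX
      set Y : Finset V := Finset.univ.filter (fun w => A w (t i)) with hY
      have hXY : X ∪ Y ⊆ Finset.univ \ {s, t i} := by
        intro w hw
        rw [Finset.mem_sdiff]
        refine ⟨Finset.mem_univ _, ?_⟩
        simp only [Finset.mem_insert, Finset.mem_singleton]
        rcases Finset.mem_union.1 hw with hw1 | hw1
        · rw [hX, Finset.mem_filter] at hw1
          rintro (rfl | rfl)
          · exact hirr _ hw1.2
          · exact hdir hw1.2
        · rw [hY, Finset.mem_filter] at hw1
          rintro (rfl | rfl)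
          · exact hdir hw1.2
          · exact hirr _ hw1.2
      have hsdcard : (Finset.univ \ ({s, t i} : Finset V)).card = n - 2 := by
        rw [Finset.card_sdiff_of_subset (Finset.subset_univ _), Finset.card_univ]
        congr 1
        rw [Finset.card_insert_of_notMem (by
            simp only [Finset.mem_singleton]
            exact fun h => (hts i) h.symm),
          Finset.card_singleton]
      have hunion : (X ∪ Y).card ≤ n - 2 := hsdcard ▸ Finset.card_le_card hXY
      have hinter : k + 1 ≤ (X ∩ Y).card := by
        have hXc := (hdegF s).1
        have hYc := (hdegF (t i)).2
        have hiX : X.card = (Finset.univ.filter (fun w => A s w)).card := by rw [hX]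
        have hiY : Y.card = (Finset.univ.filter (fun w => A w (t i))).card := by rw [hY]
        have hu := Finset.card_union_add_card_inter X Y
        have hn2 : 2 * k ≤ n := by omega
        omega
      have hns : ¬ (X ∩ Y ⊆ S) := by
        intro hsub
        have := Finset.card_le_card hsub
        omega
      obtain ⟨m, hmXY, hmS⟩ := Finset.not_subset.1 hns
      have hmX : A s m := by
        have := (Finset.mem_inter.1 hmXY).1
        rw [hX, Finset.mem_filter] at this
        exact this.2
      have hmY : A m (t i) := by
        have := (Finset.mem_inter.1 hmXY).2
        rw [hY, Finset.mem_filter] at this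
        exact this.2
      have hms : m ≠ s := fun h => hirr s (h ▸ hmX)
      have hmt : m ≠ t i := fun h => hirr (t i) (by rw [← h] at hmY ⊢; exact h ▸ hmY)
      obtain ⟨v, hvS, hvp⟩ := hS [m, t i] ⟨by simp, by simp [hmt], by
          simp only [chain'_cons, chain'_singleton, and_true]
          rw [hE, Finset.mem_filter]
          exact ⟨Finset.mem_univ _, hmY, hms, hts i⟩,
        fun a ha => by
          simp only [head?_cons, Option.some.injEq] at ha
          rw [hAs]
          exact Finset.mem_filter.2 ⟨Finset.mem_univ _, by rw [← ha]; exact hmX⟩,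
        fun b hb => by
          have : ([m, t i] : List V).getLast? = some (t i) := rfl
          rw [this] at hb
          exact (Option.some_inj.1 hb) ▸ htiBs⟩
      simp only [mem_cons, mem_singleton, not_mem_nil, or_false] at hvp
      rcases hvp with rfl | rfl
      · exact hmS hvS
      · exact hiS hvS
  obtain ⟨P0, hP0, hP0disj⟩ := menger E As Bs k hcut
  -- truncate at the first hit of Bs
  set Q : Fin k → List V := fun i => firstCut Bs (P0 i) with hQ
  have hQmem : ∀ i v, v ∈ Q i → v ∈ P0 i := fun i v hv => mem_of_mem_firstCut hv
  have hQnd : ∀ i, (Q i).Nodup := fun i => (firstCut_prefix _ _).sublist.nodup (hP0 i).2.1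
  have hQch : ∀ i, (Q i).Chain' (fun a b => (a, b) ∈ E) := fun i =>
    firstCut_chain' (hP0 i).2.2.1
  have hQhead : ∀ i, (Q i).head? = (P0 i).head? := fun i => head?_firstCut _ _
  have hlex : ∀ i, ∃ b, (Q i).getLast? = some b ∧ b ∈ Bs := by
    intro i
    refine firstCut_getLast?_mem ?_
    obtain ⟨b, hb⟩ := exists_getLast? (hP0 i).1
    exact ⟨b, mem_of_mem_getLast? (by rw [hb]; simp), (hP0 i).2.2.2.2 b hb⟩
  choose lQ hlQ1 hlQ2 using hlex
  have hQne : ∀ i, Q i ≠ [] := fun i h => by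
    have := hlQ1 i; rw [h] at this; simp at this
  have hlQmem : ∀ i, lQ i ∈ Q i := fun i => mem_of_mem_getLast? (by rw [hlQ1 i]; simp)
  have hsig : ∀ i, ∃ j, t j = lQ i := by
    intro i
    have := hlQ2 i
    rw [hBs] at this
    obtain ⟨j, _, hj⟩ := Finset.mem_image.1 this
    exact ⟨j, hj⟩
  choose σ hσ using hsig
  have hlQinj : Function.Injective lQ := by
    intro i j hij
    by_contra hne
    exact hP0disj i j hne (lQ i) (hQmem i _ (hlQmem i))
      (hQmem j _ (by rw [hij]; exact hlQmem j))
  have hσinj : Function.Injective σ := by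
    intro i j hij
    exact hlQinj (by rw [← hσ i, ← hσ j, hij])
  have hσsurj : Function.Surjective σ := Finite.surjective_of_injective hσinj
  choose τ hτ using hσsurj
  have hsnotin : ∀ j v, v ∈ Q j → v ≠ s := by
    intro j
    refine pred_of_chain (hQch j) ?_ ?_
    · intro a ha
      have := (hP0 j).2.2.2.1 a ((hQhead j) ▸ ha)
      rw [hAs, Finset.mem_filter] at this
      exact fun h => hirr s (h ▸ this.2)
    · intro a b hab
      rw [hE, Finset.mem_filter] at hab
      exact hab.2.2.2
  refine ⟨fun i => s :: Q (τ i), ?_, ?_⟩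
  · intro i
    refine ⟨by simp, ?_, ?_, by simp, ?_⟩
    · exact (hQnd (τ i)).cons (fun h => hsnotin (τ i) s h rfl)
    · rw [chain'_cons']
      constructor
      · intro y hy
        have := (hP0 (τ i)).2.2.2.1 y ((hQhead (τ i)) ▸ hy)
        rw [hAs, Finset.mem_filter] at this
        exact this.2
      · exact (hQch (τ i)).imp (fun a b hab => by
          rw [hE, Finset.mem_filter] at hab
          exact hab.2.1)
    · rw [getLast?_cons, hlQ1 (τ i)]
      simp [← hσ (τ i), hτ i]
  · intro i j hij v hvi hvj
    rcases mem_cons.1 hvi with rfl | hvi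
    · rfl
    rcases mem_cons.1 hvj with rfl | hvj
    · rfl
    exfalso
    have hτne : τ i ≠ τ j := fun h => hij (by rw [← hτ i, ← hτ j, h])
    exact hP0disj (τ i) (τ j) hτne v (hQmem _ _ hvi) (hQmem _ _ hvj)
end

section
/- With the setup below, for every pair of vertices x, y ∈ V(H) we have d⁻_H(x) + d⁺_H(y) ≥ |H| − 1, where d⁻_H and d⁺_H denote in-degree and out-degree in the induced subdigraph H. -/
private lemma insert_dipath {V : Type*} (A : V → V → Prop) (p q : List V) (j : ℕ)
    (hj : j + 1 < p.length) (s u : V)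
    (hpnd : p.Nodup) (hpc : p.Chain' A) (hph : p.head? = some s) (hpl : p.getLast? = some u)
    (hqne : q ≠ []) (hqnd : q.Nodup) (hqc : q.Chain' A)
    (x y : V) (hqh : q.head? = some x) (hql : q.getLast? = some y)
    (hux : A (p[j]'(by omega)) x) (hyv : A y (p[j+1]'hj))
    (hdisj : ∀ v ∈ q, v ∉ p) :
    (p.take (j+1) ++ q ++ p.drop (j+1)) ≠ [] ∧
    (p.take (j+1) ++ q ++ p.drop (j+1)).Nodup ∧
    (p.take (j+1) ++ q ++ p.drop (j+1)).Chain' A ∧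
    (p.take (j+1) ++ q ++ p.drop (j+1)).head? = some s ∧
    (p.take (j+1) ++ q ++ p.drop (j+1)).getLast? = some u ∧
    ∀ v, v ∈ (p.take (j+1) ++ q ++ p.drop (j+1)) ↔ (v ∈ p ∨ v ∈ q) := by
  have htlen : (p.take (j+1)).length = j + 1 := by
    rw [List.length_take]; omega
  have htne : p.take (j+1) ≠ [] := by
    apply List.ne_nil_of_length_pos; omega
  have hdne : p.drop (j+1) ≠ [] := by
    apply List.ne_nil_of_length_pos; rw [List.length_drop]; omega
  have htad := List.take_append_drop (j+1) p
  have hmem : ∀ v, v ∈ (p.take (j+1) ++ q ++ p.drop (j+1)) ↔ (v ∈ p ∨ v ∈ q) := by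
    intro v
    rw [List.mem_append, List.mem_append]
    constructor
    · rintro ((h | h) | h)
      · exact Or.inl (List.mem_of_mem_take h)
      · exact Or.inr h
      · exact Or.inl (List.mem_of_mem_drop h)
    · rintro (h | h)
      · rw [← htad, List.mem_append] at h
        rcases h with h | h
        · exact Or.inl (Or.inl h)
        · exact Or.inr h
      · exact Or.inl (Or.inr h)
  have htlast : (p.take (j+1)).getLast? = some (p[j]'(by omega)) := by
    rw [List.getLast?_eq_getElem?]
    simp only [htlen, Nat.add_sub_cancel, List.getElem?_take, if_pos (Nat.lt_succ_self j)]
    exact List.getElem?_eq_getElem (by omega)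
  have hdhead : (p.drop (j+1)).head? = some (p[j+1]'hj) := by
    rw [List.head?_drop]
    exact List.getElem?_eq_getElem hj
  refine ⟨by simp [htne], ?_, ?_, ?_, ?_, hmem⟩
  · rw [List.append_assoc, List.nodup_append]
    have hpnd' : (p.take (j+1) ++ p.drop (j+1)).Nodup := by rw [htad]; exact hpnd
    rw [List.nodup_append] at hpnd'
    refine ⟨hpnd'.1, ?_, ?_⟩
    · rw [List.nodup_append]
      exact ⟨hqnd, hpnd'.2.1, fun v hv b hb hvb => hdisj v hv (List.mem_of_mem_drop (hvb ▸ hb))⟩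
    · intro v hv b hb
      simp only [List.mem_append] at hb
      rcases hb with hvq | hvd
      · rintro rfl; exact hdisj v hvq (List.mem_of_mem_take hv)
      · exact hpnd'.2.2 v hv b hvd
  · simp only [List.Chain'] at hpc hqc ⊢
    rw [List.isChain_append, List.isChain_append]
    refine ⟨⟨hpc.take _, hqc, ?_⟩, hpc.drop _, ?_⟩
    · intro a ha b hb
      rw [htlast] at ha; rw [hqh] at hb
      simp at ha hb; subst ha; subst hb; exact hux
    · intro a ha b hb
      rw [List.getLast?_append_of_ne_nil _ hqne, hql] at ha
      rw [hdhead] at hb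
      simp at ha hb; subst ha; subst hb; exact hyv
  · rw [List.append_assoc, List.head?_append_of_ne_nil _ htne]
    rw [← List.head?_append_of_ne_nil (l₂ := p.drop (j+1)) _ htne, htad]
    exact hph
  · rw [List.getLast?_append_of_ne_nil _ hdne]
    rw [← List.getLast?_append_of_ne_nil (p.take (j+1)) hdne, htad]
    exact hpl

theorem stmt_2 {V : Type*} [Fintype V] (A : V → V → Prop)
    (hirr : Irreflexive A) (hsc : Semicomplete A)
    (k : ℕ) (hk : 2 ≤ k)
    (hcard : (9 * k) ^ 5 ≤ Fintype.card V)
    (hdeg : ∀ v : V, (Fintype.card V + k) / 2 ≤ {w : V | A v w}.ncard ∧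
      (Fintype.card V + k) / 2 ≤ {w : V | A w v}.ncard)
    (s : V) (t : Fin k → V) (htinj : Function.Injective t)
    (hst : ∀ i, t i ≠ s)
    (L : Fin k → List V) (hL : IsSTSystem A s t L)
    (hmax : ∀ P : Fin k → List V, IsSTSystem A s t P →
      (coverSet P).ncard ≤ (coverSet L).ncard)
    (hncov : coverSet L ≠ Set.univ)
    (VH : Set V) (hVH : VH = (coverSet L)ᶜ) :
    ∀ x ∈ VH, ∀ y ∈ VH,
      VH.ncard - 1 ≤ {z | z ∈ VH ∧ A z x}.ncard + {z | z ∈ VH ∧ A y z}.ncard := by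
  classical
  intro x hx y hy
  by_contra hcon
  push_neg at hcon
  obtain ⟨hLpath, hLdisj⟩ := hL
  set C := coverSet L with hC
  have hfin : ∀ S : Set V, S.Finite := fun S => S.toFinite
  have hxC : x ∉ C := by rw [hVH] at hx; exact hx
  have hyC : y ∉ C := by rw [hVH] at hy; exact hy
  set dm := {z | z ∈ VH ∧ A z x}.ncard with hdm
  set dp := {z | z ∈ VH ∧ A y z}.ncard with hdp
  have hh2 : dm + dp + 2 ≤ VH.ncard := by omega
  have hlen : ∀ i : Fin k, 0 < (L i).length := fun i =>
    List.length_pos_iff.mpr (hLpath i).1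
  have hget_eq : ∀ (i : Fin k) (a b : ℕ) (ha : a < (L i).length) (hb : b < (L i).length),
      a = b → (L i)[a]'ha = (L i)[b]'hb := by
    intro i a b ha hb h; subst h; rfl
  have hs0 : ∀ (i : Fin k), (L i)[0]'(hlen i) = s := by
    intro i
    have h := (hLpath i).2.2.2.1
    rw [List.head?_eq_getElem?, List.getElem?_eq_getElem (hlen i)] at h
    exact Option.some_injective _ h
  have hlast : ∀ (i : Fin k), (L i)[(L i).length - 1]'(by have := hlen i; omega) = t i := by
    intro i
    have h := (hLpath i).2.2.2.2
    rw [List.getLast?_eq_getElem?, List.getElem?_eq_getElem (by have := hlen i; omega)] at h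
    exact Option.some_injective _ h
  -- Step 1: obtain a path q from x to y inside VH
  obtain ⟨q, hqne, hqnd, hqch, hqh, hql, hqVH⟩ : ∃ q : List V, q ≠ [] ∧ q.Nodup ∧
      q.Chain' A ∧ q.head? = some x ∧ q.getLast? = some y ∧ ∀ v ∈ q, v ∈ VH := by
    by_cases hxy : x = y
    · subst hxy
      exact ⟨[x], by simp, by simp, by simp [List.Chain'], rfl, rfl, by simpa using hx⟩
    by_cases hAxy : A x y
    · refine ⟨[x, y], by simp, by simp [hxy], by simp [List.Chain', hAxy], rfl, by simp, ?_⟩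
      intro v hv
      rcases (by simpa using hv : v = x ∨ v = y) with rfl | rfl <;> assumption
    · have hyx : A y x := (hsc x y hxy).resolve_left hAxy
      have hUsub : ({z | z ∈ VH ∧ A z x} ∪ {z | z ∈ VH ∧ A y z}).ncard < VH.ncard := by
        have := Set.ncard_union_le {z | z ∈ VH ∧ A z x} {z | z ∈ VH ∧ A y z}
        omega
      obtain ⟨w, hwVH, hwU⟩ := Set.exists_mem_notMem_of_ncard_lt_ncard hUsub (hfin _)
      simp only [Set.mem_union, Set.mem_setOf_eq, not_or, not_and] at hwU
      obtain ⟨hw1, hw2⟩ := hwU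
      have hwnex : w ≠ x := by rintro rfl; exact hw2 hwVH hyx
      have hwney : w ≠ y := by rintro rfl; exact hw1 hwVH hyx
      have hxw : A x w := (hsc x w (Ne.symm hwnex)).resolve_right (fun h => hw1 hwVH h)
      have hwy : A w y := (hsc w y hwney).resolve_right (fun h => hw2 hwVH h)
      refine ⟨[x, w, y], by simp, by simp [hxy, hwnex.symm, hwney], by simp [List.Chain', hxw, hwy], rfl,
        by simp, ?_⟩
      intro v hv
      rcases (by simpa using hv : v = x ∨ v = w ∨ v = y) with rfl | rfl | rfl <;> assumption
  -- Step 2: no insertion point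
  have key : ∀ (i : Fin k) (jj : ℕ) (hjj : jj + 1 < (L i).length),
      A ((L i)[jj]'(by omega)) x → ¬ A y ((L i)[jj+1]'hjj) := by
    intro i jj hjj hux hyv
    obtain ⟨hne, hnd, hch, hhd, hlst⟩ := hLpath i
    have hqnotL : ∀ v ∈ q, ∀ i'', v ∉ L i'' := by
      intro v hv i'' hvL
      have h1 := hqVH v hv; rw [hVH] at h1; exact h1 ⟨i'', hvL⟩
    have hdisjq : ∀ v ∈ q, v ∉ (L i) := fun v hv => hqnotL v hv i
    obtain ⟨h1, h2, h3, h4, h5, h6⟩ := insert_dipath A (L i) q jj hjj s (t i) hnd hch hhd hlst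
      hqne hqnd hqch x y hqh hql hux hyv hdisjq
    set p' := (L i).take (jj+1) ++ q ++ (L i).drop (jj+1) with hp'
    set L' := Function.update L i p' with hL'
    have hL'i : L' i = p' := Function.update_self i p' L
    have hL'ne : ∀ i', i' ≠ i → L' i' = L i' := fun i' hne' => Function.update_of_ne hne' p' L
    have hmem' : ∀ i'' v, v ∈ L' i'' → v ∈ L i'' ∨ v ∈ q := by
      intro i'' v hv
      by_cases hii : i'' = i
      · subst hii; rw [hL'i] at hv; exact (h6 v).mp hv
      · rw [hL'ne i'' hii] at hv; exact Or.inl hv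
    have hsys : IsSTSystem A s t L' := by
      constructor
      · intro i'
        by_cases hii : i' = i
        · subst hii; rw [hL'i]; exact ⟨h1, h2, h3, h4, h5⟩
        · rw [hL'ne i' hii]; exact hLpath i'
      · intro i1 i2 h12 v hv1 hv2
        rcases hmem' i1 v hv1 with hA | hA
        · rcases hmem' i2 v hv2 with hB | hB
          · exact hLdisj i1 i2 h12 v hA hB
          · exact absurd hA (hqnotL v hB i1)
        · by_cases hi1 : i1 = i
          · have hne2 : i2 ≠ i := fun h => h12 (hi1.trans h.symm)
            rw [hL'ne i2 hne2] at hv2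
            exact absurd hv2 (hqnotL v hA i2)
          · rw [hL'ne i1 hi1] at hv1
            exact absurd hv1 (hqnotL v hA i1)
    have hsubset : C ⊆ coverSet L' := by
      rintro v ⟨i'', hv⟩
      by_cases hii : i'' = i
      · exact ⟨i, by rw [hL'i]; exact (h6 v).mpr (Or.inl (hii ▸ hv))⟩
      · exact ⟨i'', by rw [hL'ne i'' hii]; exact hv⟩
    have hxin : x ∈ coverSet L' :=
      ⟨i, by rw [hL'i]; exact (h6 x).mpr (Or.inr (List.mem_of_mem_head? (Option.mem_def.mpr hqh)))⟩
    have hss : C ⊂ coverSet L' := (Set.ssubset_iff_of_subset hsubset).mpr ⟨x, hxin, hxC⟩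
    have hlt := Set.ncard_lt_ncard hss (hfin _)
    have hle := hmax L' hsys
    omega
  -- Step 3: counting
  set X := {z | z ∈ C ∧ A z x} with hXdef
  set Y := {z | z ∈ C ∧ A y z} with hYdef
  have hXlow : (Fintype.card V + k) / 2 ≤ dm + X.ncard := by
    have hsub2 : {w | A w x} ⊆ {z | z ∈ VH ∧ A z x} ∪ X := by
      intro z hz
      by_cases hzH : z ∈ VH
      · exact Or.inl ⟨hzH, hz⟩
      · refine Or.inr ⟨?_, hz⟩
        rw [hVH] at hzH; simpa using hzH
    calc (Fintype.card V + k) / 2 ≤ {w | A w x}.ncard := (hdeg x).2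
      _ ≤ ({z | z ∈ VH ∧ A z x} ∪ X).ncard := Set.ncard_le_ncard hsub2 (hfin _)
      _ ≤ dm + X.ncard := by rw [hdm]; exact Set.ncard_union_le _ _
  have hYlow : (Fintype.card V + k) / 2 ≤ dp + Y.ncard := by
    have hsub2 : {w | A y w} ⊆ {z | z ∈ VH ∧ A y z} ∪ Y := by
      intro z hz
      by_cases hzH : z ∈ VH
      · exact Or.inl ⟨hzH, hz⟩
      · refine Or.inr ⟨?_, hz⟩
        rw [hVH] at hzH; simpa using hzH
    calc (Fintype.card V + k) / 2 ≤ {w | A y w}.ncard := (hdeg y).1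
      _ ≤ ({z | z ∈ VH ∧ A y z} ∪ Y).ncard := Set.ncard_le_ncard hsub2 (hfin _)
      _ ≤ dp + Y.ncard := by rw [hdp]; exact Set.ncard_union_le _ _
  set T := Set.range t with hTdef
  have hT : T.ncard ≤ k := by
    rw [hTdef, ← Set.image_univ]
    calc (t '' Set.univ).ncard ≤ (Set.univ : Set (Fin k)).ncard := Set.ncard_image_le (Set.finite_univ)
      _ = k := by rw [Set.ncard_univ, Nat.card_eq_fintype_card, Fintype.card_fin]
  -- the successor map
  have hstep : ∀ u ∈ X \ T, ∃ v, v ∈ C ∧ v ∉ Y ∧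
      ∃ (i : Fin k) (jj : ℕ) (hjj : jj + 1 < (L i).length),
        (L i)[jj]'(by omega) = u ∧ (L i)[jj+1]'hjj = v := by
    intro u hu
    obtain ⟨huX, huT⟩ := hu
    obtain ⟨huC, hAux⟩ := huX
    obtain ⟨i, huL⟩ := huC
    obtain ⟨jj, hjlt, hjeq⟩ := List.mem_iff_getElem.mp huL
    have hjj1 : jj + 1 < (L i).length := by
      rcases Nat.lt_or_ge (jj+1) (L i).length with h | h
      · exact h
      · exfalso
        apply huT
        refine ⟨i, ?_⟩
        rw [← hlast i, ← hjeq]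
        exact (hget_eq i _ _ _ _ (by omega)).symm
    refine ⟨(L i)[jj+1]'hjj1, ⟨i, List.getElem_mem _⟩, ?_, i, jj, hjj1, hjeq, rfl⟩
    intro hvY
    exact key i jj hjj1 (by rw [hjeq]; exact hAux) hvY.2
  choose! f hfC hfY hfw using hstep
  have hsnotpos : ∀ (i : Fin k) (m : ℕ) (hm : m < (L i).length), (L i)[m]'hm = s → m = 0 := by
    intro i m hm hms
    exact ((hLpath i).2.1.getElem_inj_iff (hi := hm) (hj := hlen i)).mp
      (by rw [hms, hs0 i])
  have hinj : Set.InjOn f (X \ T) := by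
    intro u hu u' hu' hfe
    obtain ⟨i, jj, hjj, hju, hjv⟩ := hfw u hu
    obtain ⟨i', jj', hjj', hju', hjv'⟩ := hfw u' hu'
    have hii : i = i' := by
      by_contra hne
      have hfs : f u = s := by
        apply hLdisj i i' hne (f u)
        · rw [← hjv]; exact List.getElem_mem _
        · rw [hfe, ← hjv']; exact List.getElem_mem _
      have := hsnotpos i (jj+1) hjj (by rw [hjv]; exact hfs)
      omega
    subst hii
    have h11 : jj + 1 = jj' + 1 := by
      apply ((hLpath i).2.1.getElem_inj_iff (hi := hjj) (hj := hjj')).mp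
      rw [hjv, hjv', hfe]
    rw [← hju, ← hju']
    exact hget_eq i jj jj' _ _ (by omega)
  have himg : f '' (X \ T) ∪ Y ⊆ C := by
    rintro v (⟨u, hu, rfl⟩ | hv)
    · exact hfC u hu
    · exact hv.1
  have hdisjimg : Disjoint (f '' (X \ T)) Y := by
    rw [Set.disjoint_left]
    rintro v ⟨u, hu, rfl⟩ hvY
    exact hfY u hu hvY
  have hkey2 : (X \ T).ncard + Y.ncard ≤ C.ncard := by
    rw [← Set.ncard_image_of_injOn hinj, ← Set.ncard_union_eq hdisjimg (hfin _) (hfin _)]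
    exact Set.ncard_le_ncard himg (hfin _)
  have hXT : X.ncard ≤ (X \ T).ncard + k := by
    have h1 : X ⊆ (X \ T) ∪ T := by
      intro z hz
      by_cases h : z ∈ T
      · exact Or.inr h
      · exact Or.inl ⟨hz, h⟩
    have h2 := Set.ncard_le_ncard h1 (hfin _)
    have h3 := Set.ncard_union_le (X \ T) T
    omega
  have hcompl : C.ncard + VH.ncard = Fintype.card V := by
    have h := Set.ncard_add_ncard_compl C
    rw [← hVH] at h
    rwa [Nat.card_eq_fintype_card] at h
  omega
end

section
/- With the setup below, the induced subdigraph H is strongly connected, i.e. for every pair x, y of distinct vertices of H there is a directed x-y path and a directed y-x path in H. -/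
section Helpers
variable {α : Type*}

lemma my_exists_dup {p : List α} (h : ¬ p.Nodup) :
    ∃ (l1 : List α) (a : α) (l2 : List α), p = l1 ++ a :: l2 ∧ a ∈ l2 := by
  induction p with
  | nil => simp at h
  | cons hd tl ih =>
    by_cases hm : hd ∈ tl
    · exact ⟨[], hd, tl, rfl, hm⟩
    · have htl : ¬ tl.Nodup := by
        intro hnd; exact h (List.nodup_cons.mpr ⟨hm, hnd⟩)
      obtain ⟨l1, a, l2, rfl, ha⟩ := ih htl
      exact ⟨hd :: l1, a, l2, rfl, ha⟩

lemma my_shorten (r : α → α → Prop) :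
    ∀ (n : ℕ) (p : List α), p.length ≤ n → p ≠ [] → p.Chain' r →
    ∃ q : List α, q ≠ [] ∧ q.Nodup ∧ q.Chain' r ∧ q.head? = p.head? ∧
      q.getLast? = p.getLast? ∧ ∀ v ∈ q, v ∈ p := by
  intro n
  induction n with
  | zero =>
    intro p hl hne _
    cases p with
    | nil => exact absurd rfl hne
    | cons a t => simp at hl
  | succ n ih =>
    intro p hl hne hch
    by_cases hnd : p.Nodup
    · exact ⟨p, hne, hnd, hch, rfl, rfl, fun v hv => hv⟩
    · obtain ⟨l1, a, l2, rfl, ha⟩ := my_exists_dup hnd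
      obtain ⟨l2a, l2b, rfl⟩ := List.append_of_mem ha
      have hch' : (l1 ++ a :: l2b).Chain' r := by
        rcases List.isChain_append.mp hch with ⟨h1, h2, h3⟩
        have h2' : ((a :: l2a) ++ a :: l2b).Chain' r := h2
        refine List.isChain_append.mpr ⟨h1, List.IsChain.right_of_append h2', ?_⟩
        intro u hu v hv
        exact h3 u hu v (by simpa using hv)
      have hlen : (l1 ++ a :: l2b).length ≤ n := by
        simp only [List.length_append, List.length_cons] at hl ⊢
        omega
      obtain ⟨q, hqne, hqnd, hqch, hqh, hql, hqm⟩ :=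
        ih (l1 ++ a :: l2b) hlen (by simp) hch'
      refine ⟨q, hqne, hqnd, hqch, ?_, ?_, ?_⟩
      · rw [hqh]; cases l1 <;> simp
      · rw [hql, List.getLast?_append_cons,
          show l1 ++ a :: (l2a ++ a :: l2b) = l1 ++ (a :: l2a) ++ a :: l2b by simp,
          List.getLast?_append_cons]
      · intro v hv
        have := hqm v hv
        simp only [List.mem_append, List.mem_cons] at this ⊢
        tauto

lemma my_chain_of_rtg {r : α → α → Prop} {x y : α} (h : Relation.ReflTransGen r x y) :
    ∃ p : List α, p ≠ [] ∧ p.Chain' r ∧ p.head? = some x ∧ p.getLast? = some y ∧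
      ∀ v ∈ p, v = x ∨ ∃ u, r u v := by
  induction h with
  | refl => exact ⟨[x], by simp [List.Chain']⟩
  | @tail b c h1 h2 ih =>
    obtain ⟨p, hne, hch, hh, hl, hm⟩ := ih
    refine ⟨p ++ [c], by simp, ?_, ?_, ?_, ?_⟩
    · refine List.isChain_append.mpr ⟨hch, List.isChain_singleton c, ?_⟩
      intro u hu v hv
      simp only [List.head?_cons, Option.mem_def, Option.some.injEq] at hv
      rw [hl] at hu
      simp only [Option.mem_def, Option.some.injEq] at hu
      subst hu; subst hv; exact h2
    · cases p with
      | nil => exact absurd rfl hne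
      | cons d q => simpa using hh
    · rw [List.getLast?_append_of_ne_nil _ (by simp)]; simp
    · intro v hv
      rcases List.mem_append.mp hv with hv | hv
      · exact hm v hv
      · simp only [List.mem_singleton] at hv
        subst hv; exact Or.inr ⟨b, h2⟩

lemma my_append_cancel {b : α} : ∀ {u u' v v' : List α}, b ∉ u → b ∉ u' →
    u ++ b :: v = u' ++ b :: v' → u = u' := by
  intro u
  induction u with
  | nil =>
    intro u' v v' _ hb' h
    cases u' with
    | nil => rfl
    | cons c u'' =>
      simp only [List.nil_append, List.cons_append, List.cons.injEq] at h
      exact absurd (h.1 ▸ List.mem_cons_self (a := c) (l := u'')) hb'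
  | cons c u ihu =>
    intro u' v v' hb hb' h
    cases u' with
    | nil =>
      simp only [List.cons_append, List.nil_append, List.cons.injEq] at h
      exact absurd (h.1 ▸ List.mem_cons_self (a := c) (l := u)) hb
    | cons c' u'' =>
      simp only [List.cons_append, List.cons.injEq] at h
      have := ihu (fun hm => hb (List.mem_cons_of_mem c hm))
        (fun hm => hb' (List.mem_cons_of_mem c' hm)) h.2
      rw [h.1, this]

lemma my_pred_unique {p : List α} (hnd : p.Nodup) {l1 l1' l2 l2' : List α} {a a' b : α}
    (h1 : p = l1 ++ a :: b :: l2) (h2 : p = l1' ++ a' :: b :: l2') : a = a' := by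
  have e1 : p = (l1 ++ [a]) ++ b :: l2 := by simp [h1]
  have e2 : p = (l1' ++ [a']) ++ b :: l2' := by simp [h2]
  have hb1 : b ∉ l1 ++ [a] := by
    intro hm
    have := List.disjoint_of_nodup_append (e1 ▸ hnd) hm
    simp at this
  have hb2 : b ∉ l1' ++ [a'] := by
    intro hm
    have := List.disjoint_of_nodup_append (e2 ▸ hnd) hm
    simp at this
  have := my_append_cancel hb1 hb2 (e1 ▸ e2)
  have := congrArg List.getLast? this
  simpa using this

end Helpers

set_option maxHeartbeats 2000000 in
lemma key_reach {V : Type*} [Fintype V] (A : V → V → Prop)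
    (hirr : Irreflexive A) (hsc : Semicomplete A)
    (k : ℕ)
    (hdeg : ∀ v : V, (Fintype.card V + k) / 2 ≤ {w : V | A v w}.ncard ∧
      (Fintype.card V + k) / 2 ≤ {w : V | A w v}.ncard)
    (s : V) (t : Fin k → V)
    (L : Fin k → List V) (hL : IsSTSystem A s t L)
    (hmax : ∀ P : Fin k → List V, IsSTSystem A s t P →
      (coverSet P).ncard ≤ (coverSet L).ncard)
    (VH : Set V) (hVH : VH = (coverSet L)ᶜ) :
    ∀ x ∈ VH, ∀ y ∈ VH, x ≠ y →
      ∃ p : List V, IsDipath A p x y ∧ ∀ v ∈ p, v ∈ VH := by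
  classical
  intro x hx y hy hxy
  set r : V → V → Prop := fun u w => u ∈ VH ∧ w ∈ VH ∧ A u w with hrdef
  by_cases hreach : Relation.ReflTransGen r x y
  · obtain ⟨p, hne, hch, hh, hl, hm⟩ := my_chain_of_rtg hreach
    have hmem : ∀ v ∈ p, v ∈ VH := by
      intro v hv
      rcases hm v hv with h | ⟨u, hu⟩
      · exact h ▸ hx
      · exact hu.2.1
    obtain ⟨q, hqne, hqnd, hqch, hqh, hql, hqm⟩ := my_shorten r p.length p le_rfl hne hch
    exact ⟨q, ⟨hqne, hqnd, hqch.imp (fun a b h => h.2.2), hqh.trans hh, hql.trans hl⟩,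
      fun v hv => hmem v (hqm v hv)⟩
  exfalso
  set n := Fintype.card V with hn
  set C := coverSet L with hCdef
  have hCV : ∀ v, v ∈ VH ↔ v ∉ C := by
    intro v; rw [hVH]; exact Iff.rfl
  have hmemC : ∀ (i : Fin k), ∀ v ∈ L i, v ∈ C := fun i v hv => ⟨i, hv⟩
  set R : Set V := {w | w ∈ VH ∧ Relation.ReflTransGen r x w} with hRdef
  have hxR : x ∈ R := ⟨hx, Relation.ReflTransGen.refl⟩
  have hyR : y ∉ R := fun h => hreach h.2
  have hRVH : R ⊆ VH := fun w h => h.1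
  have hclosed : ∀ u ∈ R, ∀ w, A u w → w ∈ VH → w ∈ R := by
    intro u hu w haw hw
    exact ⟨hw, hu.2.tail ⟨hu.1, hw, haw⟩⟩
  set Xc : Set V := VH \ R with hXcdef
  have hyXc : y ∈ Xc := ⟨hy, hyR⟩
  -- out-neighbours of x inside C
  set NxOut : Set V := {w | w ∈ C ∧ A x w} with hNxdef
  have hsubx : {w | A x w} ⊆ NxOut ∪ (R \ {x}) := by
    intro w hw
    by_cases hwC : w ∈ C
    · exact Or.inl ⟨hwC, hw⟩
    · refine Or.inr ⟨hclosed x hxR w hw ((hCV w).mpr hwC), ?_⟩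
      intro h
      exact hirr x (by rwa [Set.mem_singleton_iff.mp h] at hw)
  have ineqA : (n + k) / 2 + 1 ≤ NxOut.ncard + R.ncard := by
    have h1 := (hdeg x).1
    have h2 : {w | A x w}.ncard ≤ NxOut.ncard + (R \ {x}).ncard :=
      le_trans (Set.ncard_le_ncard hsubx) (Set.ncard_union_le _ _)
    have h3 : (R \ {x}).ncard + 1 = R.ncard := Set.ncard_diff_singleton_add_one hxR
    omega
  set NyIn : Set V := {a | a ∈ C ∧ A a y} with hNydef
  have hsuby : {w | A w y} ⊆ NyIn ∪ (Xc \ {y}) := by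
    intro w hw
    by_cases hwC : w ∈ C
    · exact Or.inl ⟨hwC, hw⟩
    · have hwVH : w ∈ VH := (hCV w).mpr hwC
      have hwR : w ∉ R := by
        intro hwR
        exact hyR (hclosed w hwR y hw hy)
      refine Or.inr ⟨⟨hwVH, hwR⟩, ?_⟩
      intro h
      exact hirr y (by rwa [Set.mem_singleton_iff.mp h] at hw)
  have ineqB : (n + k) / 2 + 1 ≤ NyIn.ncard + Xc.ncard := by
    have h1 := (hdeg y).2
    have h2 : {w | A w y}.ncard ≤ NyIn.ncard + (Xc \ {y}).ncard :=
      le_trans (Set.ncard_le_ncard hsuby) (Set.ncard_union_le _ _)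
    have h3 : (Xc \ {y}).ncard + 1 = Xc.ncard := Set.ncard_diff_singleton_add_one hyXc
    omega
  have hRXc : Xc.ncard + R.ncard = VH.ncard :=
    Set.ncard_diff_add_ncard_of_subset hRVH
  have hCVH : C.ncard + VH.ncard = n := by
    rw [hVH]
    have := Set.ncard_add_ncard_compl C
    rwa [Nat.card_eq_fintype_card] at this
  -- consecutive pairs
  set Consec : V → V → Prop := fun a b => ∃ i l1 l2, L i = l1 ++ a :: b :: l2 with hConsec
  set NyIn' : Set V := {a | a ∈ NyIn ∧ ∃ b, Consec a b} with hNy'def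
  have hends : NyIn \ NyIn' ⊆ Set.range t := by
    rintro a ⟨haIn, haN⟩
    obtain ⟨i, hai⟩ := haIn.1
    obtain ⟨l1, l2, hLi⟩ := List.append_of_mem hai
    cases l2 with
    | cons b l2' => exact absurd ⟨haIn, b, i, l1, l2', hLi⟩ haN
    | nil =>
      have hlast := (hL.1 i).2.2.2.2
      rw [hLi, List.getLast?_append_cons] at hlast
      simp only [List.getLast?_singleton, Option.some.injEq] at hlast
      exact ⟨i, hlast.symm⟩
  have hrange : (Set.range t).ncard ≤ k := by
    rw [← Set.image_univ]
    calc (t '' Set.univ).ncard ≤ (Set.univ : Set (Fin k)).ncard := Set.ncard_image_le (Set.toFinite _)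
    _ = k := by rw [Set.ncard_univ, Nat.card_eq_fintype_card, Fintype.card_fin]
  have hNyIn'sub : NyIn ⊆ NyIn' ∪ Set.range t := by
    intro a ha
    by_cases h : a ∈ NyIn'
    · exact Or.inl h
    · exact Or.inr (hends ⟨ha, h⟩)
  have hNycount : NyIn.ncard ≤ NyIn'.ncard + k := by
    calc NyIn.ncard ≤ (NyIn' ∪ Set.range t).ncard := Set.ncard_le_ncard hNyIn'sub
    _ ≤ NyIn'.ncard + (Set.range t).ncard := Set.ncard_union_le _ _
    _ ≤ NyIn'.ncard + k := by omega
  -- successor map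
  set f : V → V := fun a => if h : ∃ b, Consec a b then h.choose else a with hfdef
  have hfc : ∀ a, (∃ b, Consec a b) → Consec a (f a) := by
    intro a h
    simp only [hfdef, dif_pos h]
    exact h.choose_spec
  have hb_ne_s : ∀ (m : Fin k) (u w : List V) (c b : V), L m = u ++ c :: b :: w → b ≠ s := by
    intro m u w c b hm hbs
    have hhd := (hL.1 m).2.2.2.1
    have hnd := (hL.1 m).2.1
    rw [hm] at hhd hnd
    cases u with
    | nil =>
      simp only [List.nil_append, List.head?_cons, Option.some.injEq] at hhd
      simp only [List.nil_append, List.nodup_cons, List.mem_cons] at hnd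
      exact hnd.1 (Or.inl (hhd.trans hbs.symm))
    | cons d u' =>
      simp only [List.cons_append, List.head?_cons, Option.some.injEq] at hhd
      rw [List.cons_append, List.nodup_cons] at hnd
      refine hnd.1 ?_
      rw [hhd, ← hbs]
      simp
  have hInj : Set.InjOn f NyIn' := by
    intro a1 h1 a2 h2 heq
    have c1 : Consec a1 (f a1) := hfc a1 h1.2
    have c2 : Consec a2 (f a1) := heq ▸ hfc a2 h2.2
    obtain ⟨i, l1, l2, hi⟩ := c1
    obtain ⟨j, l1', l2', hj⟩ := c2
    have hij : i = j := by
      by_contra hne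
      have hbi : f a1 ∈ L i := by rw [hi]; simp
      have hbj : f a1 ∈ L j := by rw [hj]; simp
      exact hb_ne_s i l1 l2 a1 (f a1) hi (hL.2 i j hne (f a1) hbi hbj)
    subst hij
    exact my_pred_unique (hL.1 i).2.1 hi hj
  set B : Set V := f '' NyIn' with hBdef
  have hBcard : B.ncard = NyIn'.ncard := Set.ncard_image_of_injOn hInj
  have hBC : B ⊆ C := by
    rintro b ⟨a, ha, rfl⟩
    obtain ⟨i, l1, l2, hi⟩ := hfc a ha.2
    exact hmemC i (f a) (by rw [hi]; simp)
  have hcount : C.ncard + 1 ≤ B.ncard + NxOut.ncard := by omega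
  have hinter : (B ∩ NxOut).Nonempty := by
    rw [Set.nonempty_iff_ne_empty]
    intro hemp
    have hdisj : Disjoint B NxOut := Set.disjoint_iff_inter_eq_empty.mpr hemp
    have h1 : (B ∪ NxOut).ncard = B.ncard + NxOut.ncard := Set.ncard_union_eq hdisj
    have h2 : (B ∪ NxOut).ncard ≤ C.ncard :=
      Set.ncard_le_ncard (Set.union_subset hBC (fun w hw => hw.1))
    omega
  obtain ⟨b, ⟨⟨a, haN', hfa⟩, hbC, hxb⟩⟩ := hinter
  have hcons : Consec a b := hfa ▸ hfc a haN'.2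
  have haay : A a y := haN'.1.2
  obtain ⟨i, l1, l2, hLi⟩ := hcons
  -- the arc y -> x
  have hyx : A y x := by
    rcases hsc x y hxy with h | h
    · exact absurd (Relation.ReflTransGen.single ⟨hx, hy, h⟩) hreach
    · exact h
  have hxC : x ∉ C := (hCV x).mp hx
  have hyC : y ∉ C := (hCV y).mp hy
  have hxLi : ∀ j, x ∉ L j := fun j h => hxC (hmemC j x h)
  have hyLi : ∀ j, y ∉ L j := fun j h => hyC (hmemC j y h)
  -- build new system
  set newp : List V := l1 ++ a :: y :: x :: b :: l2 with hnewp
  set P' : Fin k → List V := fun j => if j = i then newp else L j with hP'def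
  obtain ⟨hine, hind, hich, hihd, hilast⟩ := hL.1 i
  have hmemnew : ∀ v, v ∈ newp ↔ v ∈ L i ∨ v = y ∨ v = x := by
    intro v
    rw [hnewp, hLi]
    simp only [List.mem_append, List.mem_cons]
    tauto
  have hdinew : IsDipath A newp s (t i) := by
    refine ⟨by simp [hnewp], ?_, ?_, ?_, ?_⟩
    · -- Nodup
      have h0 : (l1 ++ a :: b :: l2).Nodup := hLi ▸ hind
      have h1 : ((l1 ++ [a]) ++ x :: b :: l2).Nodup := by
        rw [List.nodup_middle, List.nodup_cons]
        constructor
        · intro hm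
          exact hxLi i (by rw [hLi]; simpa using hm)
        · simpa using h0
      have h2 : ((l1 ++ [a]) ++ y :: x :: b :: l2).Nodup := by
        rw [List.nodup_middle, List.nodup_cons]
        constructor
        · intro hm
          have hm2 : y ∈ L i ∨ y = x := by
            rw [hLi]
            simp only [List.mem_append, List.mem_cons, List.mem_singleton,
              List.not_mem_nil] at hm ⊢
            tauto
          rcases hm2 with h | h
          · exact hyLi i h
          · exact hxy.symm h
        · simpa using h1
      simpa using h2
    · -- Chain'
      have hch0 : (l1 ++ a :: b :: l2).Chain' A := hLi ▸ hich
      rcases List.isChain_append.mp hch0 with ⟨c1, c2, c3⟩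
      rw [List.isChain_cons_cons] at c2
      refine List.isChain_append.mpr ⟨c1, ?_, ?_⟩
      · rw [List.isChain_cons_cons, List.isChain_cons_cons, List.isChain_cons_cons]
        exact ⟨haay, hyx, hxb, c2.2⟩
      · intro z hz w hw
        simp only [List.head?_cons, Option.mem_def, Option.some.injEq] at hw
        subst hw
        exact c3 z hz a (by simp)
    · -- head?
      have hh0 : (l1 ++ a :: b :: l2).head? = some s := hLi ▸ hihd
      have hkey : ∀ u u' : List V, (l1 ++ a :: u).head? = (l1 ++ a :: u').head? := by
        intro u u'; cases l1 <;> simp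
      rw [hnewp, hkey (y :: x :: b :: l2) (b :: l2)]
      exact hh0
    · -- getLast?
      have hl0 : (b :: l2).getLast? = some (t i) := by
        have := hLi ▸ hilast
        rwa [show l1 ++ a :: b :: l2 = (l1 ++ [a]) ++ b :: l2 by simp,
          List.getLast?_append_cons] at this
      rw [show newp = (l1 ++ [a, y, x]) ++ b :: l2 by simp [hnewp],
        List.getLast?_append_cons]
      exact hl0
  have hsys : IsSTSystem A s t P' := by
    constructor
    · intro j
      by_cases hj : j = i
      · rw [hj]; simpa [hP'def] using hdinew
      · simpa [hP'def, hj] using hL.1 j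
    · intro j j' hne v hvj hvj'
      by_cases hj : j = i <;> by_cases hj' : j' = i
      · exact absurd (hj.trans hj'.symm) hne
      · simp only [hP'def, if_pos hj, if_neg hj'] at hvj hvj'
        rcases (hmemnew v).mp hvj with h | h | h
        · exact hL.2 i j' (fun hh => hj' hh.symm) v h hvj'
        · exact absurd hvj' (h ▸ hyLi j')
        · exact absurd hvj' (h ▸ hxLi j')
      · simp only [hP'def, if_pos hj', if_neg hj] at hvj hvj'
        rcases (hmemnew v).mp hvj' with h | h | h
        · exact hL.2 j i hj v hvj h
        · exact absurd hvj (h ▸ hyLi j)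
        · exact absurd hvj (h ▸ hxLi j)
      · simp only [hP'def, if_neg hj, if_neg hj'] at hvj hvj'
        exact hL.2 j j' hne v hvj hvj'
  have hcov : coverSet P' = insert y (insert x C) := by
    ext v
    simp only [coverSet, Set.mem_setOf_eq, Set.mem_insert_iff]
    constructor
    · rintro ⟨j, hv⟩
      by_cases hj : j = i
      · simp only [hP'def, if_pos hj] at hv
        rcases (hmemnew v).mp hv with h | h | h
        · exact Or.inr (Or.inr (hmemC i v h))
        · exact Or.inl h
        · exact Or.inr (Or.inl h)
      · simp only [hP'def, if_neg hj] at hv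
        exact Or.inr (Or.inr (hmemC j v hv))
    · rintro (rfl | rfl | ⟨j, hv⟩)
      · exact ⟨i, by simp only [hP'def, if_pos rfl]; exact (hmemnew v).mpr (Or.inr (Or.inl rfl))⟩
      · exact ⟨i, by simp only [hP'def, if_pos rfl]; exact (hmemnew v).mpr (Or.inr (Or.inr rfl))⟩
      · by_cases hj : j = i
        · exact ⟨j, by simp only [hP'def, if_pos hj]; exact (hmemnew v).mpr (Or.inl (hj ▸ hv))⟩
        · exact ⟨j, by simp only [hP'def, if_neg hj]; exact hv⟩
  have hcard2 : (coverSet P').ncard = C.ncard + 2 := by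
    rw [hcov, Set.ncard_insert_of_notMem (by
        simp only [Set.mem_insert_iff]
        rintro (h | h)
        · exact hxy h.symm
        · exact hyC h),
      Set.ncard_insert_of_notMem hxC]
  have := hmax P' hsys
  rw [hcard2] at this
  omega


theorem stmt_3 {V : Type*} [Fintype V] (A : V → V → Prop)
    (hirr : Irreflexive A) (hsc : Semicomplete A)
    (k : ℕ) (hk : 2 ≤ k)
    (hcard : (9 * k) ^ 5 ≤ Fintype.card V)
    (hdeg : ∀ v : V, (Fintype.card V + k) / 2 ≤ {w : V | A v w}.ncard ∧
      (Fintype.card V + k) / 2 ≤ {w : V | A w v}.ncard)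
    (s : V) (t : Fin k → V) (htinj : Function.Injective t)
    (hst : ∀ i, t i ≠ s)
    (L : Fin k → List V) (hL : IsSTSystem A s t L)
    (hmax : ∀ P : Fin k → List V, IsSTSystem A s t P →
      (coverSet P).ncard ≤ (coverSet L).ncard)
    (hncov : coverSet L ≠ Set.univ)
    (VH : Set V) (hVH : VH = (coverSet L)ᶜ) :
    ∀ x ∈ VH, ∀ y ∈ VH, x ≠ y →
      (∃ p : List V, IsDipath A p x y ∧ ∀ v ∈ p, v ∈ VH) ∧
      (∃ p : List V, IsDipath A p y x ∧ ∀ v ∈ p, v ∈ VH) := by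
  intro x hx y hy hxy
  exact ⟨key_reach A hirr hsc k hdeg s t L hL hmax VH hVH x hx y hy hxy,
    key_reach A hirr hsc k hdeg s t L hL hmax VH hVH y hy x hx hxy.symm⟩
end

section
/- With the setup below, the order of H satisfies |H| ≤ ⌊(n−k+1)/2⌋ − 1; equivalently, the number of vertices covered by L satisfies |V(L)| ≥ ⌈(n+k−1)/2⌉ + 1. -/
/-- From reflexive-transitive reachability one can extract a nodup chain (simple path). -/
lemma exists_nodup_chain {V : Type*} (r : V → V → Prop) {x y : V}
    (h : Relation.ReflTransGen r x y) :
    ∃ l : List V, l ≠ [] ∧ l.Nodup ∧ l.Chain' r ∧ l.head? = some x ∧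
      l.getLast? = some y ∧ ∀ z ∈ l, z = x ∨ ∃ w, r w z := by
  induction h with
  | refl => exact ⟨[x], by simp [List.Chain']⟩
  | @tail b c hab hbc ih =>
    obtain ⟨l, hne, hnd, hch, hhd, hlast, hmem⟩ := ih
    classical
    by_cases hc : c ∈ l
    · set p : V → Bool := fun z => decide (z ≠ c) with hp
      set tk := l.takeWhile p with htk
      set dr := l.dropWhile p with hdr
      have htd : tk ++ dr = l := List.takeWhile_append_dropWhile (p := p) (l := l)
      have hcntk : c ∉ tk := by
        intro hmem'
        have := List.mem_takeWhile_imp hmem'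
        simp [hp] at this
      have hdrne : dr ≠ [] := by
        intro h0
        rw [h0, List.append_nil] at htd
        exact hcntk (htd ▸ hc)
      have hdl : 0 < dr.length := List.length_pos_iff.2 hdrne
      have hhead : dr.get ⟨0, hdl⟩ = c := by
        have := List.dropWhile_get_zero_not p l hdl
        simpa [hp, hdr] using this
      have hdrc : dr = c :: dr.tail := by
        have := (List.cons_head_tail hdrne).symm
        rwa [← List.get_mk_zero hdl, hhead] at this
      have hpre : (tk ++ [c]) <+: l := ⟨dr.tail, by rw [List.append_assoc, ← htd, hdrc]; simp⟩
      refine ⟨tk ++ [c], by simp, ?_, hch.prefix hpre, ?_, List.getLast?_concat, ?_⟩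
      · rw [List.nodup_append]
        refine ⟨(List.takeWhile_prefix p).sublist.nodup hnd, by simp, ?_⟩
        intro a ha b' hb hab
        simp at hb
        subst hb hab; exact hcntk ha
      · rw [List.head?_append, ← hhd, ← htd, List.head?_append, hdrc]
        simp
      · intro z hz
        rcases List.mem_append.1 hz with h1 | h1
        · exact hmem z (hpre.sublist.mem hz)
        · simp at h1; subst h1; exact Or.inr ⟨b, hbc⟩
    · refine ⟨l ++ [c], by simp, ?_, ?_, ?_, List.getLast?_concat, ?_⟩
      · rw [List.nodup_append]
        exact ⟨hnd, by simp, fun a ha b' h1 hab => by simp at h1; subst h1 hab; exact hc ha⟩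
      · rw [List.Chain', List.isChain_append]
        refine ⟨hch, by simp, ?_⟩
        intro a ha b' hb'
        simp at hb'; subst hb'
        rw [hlast] at ha; simp at ha; subst ha; exact hbc
      · rw [List.head?_append, hhd]; rfl
      · intro z hz
        rcases List.mem_append.1 hz with h1 | h1
        · exact hmem z h1
        · simp at h1; subst h1; exact Or.inr ⟨b, hbc⟩

/-- In a finite semicomplete digraph, every nonempty set contains a vertex from which
every vertex of the set is reachable inside the set. -/
lemma exists_king {V : Type*} [Fintype V] {A : V → V → Prop} (hsc : Semicomplete A)
    (S : Set V) (hS : S.Nonempty) :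
    ∃ h ∈ S, ∀ y ∈ S, Relation.ReflTransGen (fun a b => A a b ∧ a ∈ S ∧ b ∈ S) h y := by
  classical
  set r := fun a b => A a b ∧ a ∈ S ∧ b ∈ S with hr
  obtain ⟨h₀, hh₀, hmaxr⟩ := Set.exists_max_image S
    (fun h => {z | Relation.ReflTransGen r h z}.ncard) S.toFinite hS
  refine ⟨h₀, hh₀, ?_⟩
  intro y hy
  by_contra hnr
  have hyx : y ≠ h₀ := fun h => hnr (h ▸ Relation.ReflTransGen.refl)
  have hAy : A y h₀ := by
    rcases hsc h₀ y (Ne.symm hyx) with h1 | h1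
    · exact absurd (Relation.ReflTransGen.single ⟨h1, hh₀, hy⟩) hnr
    · exact h1
  have hsub : {z | Relation.ReflTransGen r h₀ z} ⊂ {z | Relation.ReflTransGen r y z} := by
    constructor
    · intro z hz
      exact (Relation.ReflTransGen.single ⟨hAy, hy, hh₀⟩).trans hz
    · intro hsub'
      exact hnr (hsub' (Relation.ReflTransGen.refl))
  exact absurd (hmaxr y hy) (Nat.not_le.2 (Set.ncard_lt_ncard hsub (Set.toFinite _)))

lemma exists_succ_decomp {V : Type*} {l : List V} {u : V} (hu : u ∈ l)
    (hne : l.getLast? ≠ some u) : ∃ l1 v l2, l = l1 ++ u :: v :: l2 := by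
  obtain ⟨l1, rest, rfl⟩ := List.append_of_mem hu
  cases rest with
  | nil => exact absurd (List.getLast?_concat (l := l1)) hne
  | cons v l2 => exact ⟨l1, v, l2, rfl⟩

lemma exists_pred_decomp {V : Type*} {l : List V} {v s : V} (hv : v ∈ l)
    (hhd : l.head? = some s) (hne : v ≠ s) : ∃ l1 u l2, l = l1 ++ u :: v :: l2 := by
  cases l with
  | nil => simp at hhd
  | cons a rest =>
    simp only [List.head?_cons, Option.some.injEq] at hhd
    obtain rfl : s = a := hhd.symm
    have hv' : v ∈ rest := by
      rcases List.mem_cons.1 hv with h | h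
      · exact absurd h hne
      · exact h
    obtain ⟨r1, r2, rfl⟩ := List.append_of_mem hv'
    have hne0 : (s :: r1) ≠ [] := by simp
    refine ⟨(s :: r1).dropLast, (s :: r1).getLast hne0, r2, ?_⟩
    have := List.dropLast_append_getLast hne0
    calc s :: (r1 ++ v :: r2) = (s :: r1) ++ v :: r2 := by simp
    _ = ((s :: r1).dropLast ++ [(s :: r1).getLast hne0]) ++ v :: r2 := by rw [this]
    _ = (s :: r1).dropLast ++ (s :: r1).getLast hne0 :: v :: r2 := by simp

/-- Inserting a disjoint chain into a path system strictly increases the covered set. -/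
lemma insert_grows {V : Type*} [Fintype V] {A : V → V → Prop} {k : ℕ} {s : V} {t : Fin k → V}
    {L : Fin k → List V} (hL : IsSTSystem A s t L) (i : Fin k) (l1 l2 : List V) (u v : V)
    (hPi : L i = l1 ++ u :: v :: l2) (q : List V) (hq : q ≠ []) (hqnd : q.Nodup)
    (hqc : q.Chain' A) (hqH : ∀ z ∈ q, z ∉ coverSet L)
    (hu : ∀ x ∈ q.head?, A u x) (hv : ∀ y ∈ q.getLast?, A y v) :
    ∃ P, IsSTSystem A s t P ∧ (coverSet L).ncard < (coverSet P).ncard := by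
  classical
  set newl := l1 ++ u :: (q ++ v :: l2) with hnewl
  set P := Function.update L i newl with hPdef
  have hPj : ∀ j, j ≠ i → P j = L j := fun j hj => Function.update_of_ne hj _ _
  have hPi' : P i = newl := Function.update_self _ _ _
  have hmemnew : ∀ z, z ∈ newl ↔ (z ∈ L i ∨ z ∈ q) := by
    intro z; rw [hPi]; simp [hnewl]; tauto
  have hLi2 : L i = (l1 ++ [u]) ++ (v :: l2) := by rw [hPi]; simp
  have hnew2 : newl = (l1 ++ [u]) ++ (q ++ v :: l2) := by simp [hnewl]
  obtain ⟨hne0, hnd0, hch0, hhd0, hlast0⟩ := hL.1 i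
  have hch0' : List.Chain' A ((l1 ++ [u]) ++ (v :: l2)) := by rwa [← hLi2]
  rw [List.Chain', List.isChain_append] at hch0'
  obtain ⟨hc1, hc2, _⟩ := hch0'
  have hAux : A u (q.head hq) := hu _ (by rw [List.head?_eq_head hq]; rfl)
  have hAyv : A (q.getLast hq) v := hv _ (by rw [List.getLast?_eq_getLast hq]; rfl)
  have hchnew : newl.Chain' A := by
    rw [hnew2, List.Chain', List.isChain_append]
    refine ⟨hc1, ?_, ?_⟩
    · rw [List.isChain_append]
      refine ⟨hqc, hc2, ?_⟩
      intro a ha b hb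
      simp only [List.head?_cons, Option.mem_def, Option.some.injEq] at hb
      subst hb
      rw [List.getLast?_eq_getLast hq] at ha
      simp only [Option.mem_def, Option.some.injEq] at ha
      subst ha
      exact hAyv
    · intro a ha b hb
      rw [List.getLast?_concat] at ha
      simp only [Option.mem_def, Option.some.injEq] at ha
      subst ha
      rw [List.head?_append, List.head?_eq_head hq] at hb
      simp only [Option.some_or, Option.or_some, Option.mem_def, Option.some.injEq] at hb
      subst hb
      exact hAux
  have hperm : newl.Perm ((L i) ++ q) := by
    rw [hPi, hnewl]
    refine (List.Perm.append_left l1 (List.Perm.cons u List.perm_append_comm)).trans ?_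
    simp
  have hndnew : newl.Nodup := by
    rw [hperm.nodup_iff, List.nodup_append]
    exact ⟨hnd0, hqnd, fun a ha b hb hab => hqH b hb (by subst hab; exact ⟨i, ha⟩)⟩
  have hhdnew : newl.head? = some s := by
    rw [hnewl, List.head?_append]
    rw [hPi, List.head?_append] at hhd0
    simpa using hhd0
  have hlastnew : newl.getLast? = some (t i) := by
    rw [hnew2, List.getLast?_append]
    rw [hLi2, List.getLast?_append] at hlast0
    rw [List.getLast?_append]
    simpa [List.getLast?_cons] using hlast0
  have hnenew : newl ≠ [] := by simp [hnewl]
  have hsys : IsSTSystem A s t P := by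
    constructor
    · intro j
      by_cases hj : j = i
      · subst hj; rw [hPi']
        exact ⟨hnenew, hndnew, hchnew, hhdnew, hlastnew⟩
      · rw [hPj j hj]; exact hL.1 j
    · have key : ∀ j, j ≠ i → ∀ z, z ∈ newl → z ∈ L j → z = s := by
        intro j hj z hz1 hz2
        rcases (hmemnew z).1 hz1 with h | h
        · exact hL.2 i j (Ne.symm hj) z h hz2
        · exact absurd ⟨j, hz2⟩ (hqH z h)
      intro i' j' hij z hz1 hz2
      by_cases hi' : i' = i
      · subst hi'
        rw [hPi'] at hz1
        have hj' : j' ≠ i' := Ne.symm hij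
        rw [hPj j' hj'] at hz2
        exact key j' hj' z hz1 hz2
      · by_cases hj' : j' = i
        · subst hj'
          rw [hPi'] at hz2
          rw [hPj i' hi'] at hz1
          exact key i' hi' z hz2 hz1
        · rw [hPj i' hi'] at hz1
          rw [hPj j' hj'] at hz2
          exact hL.2 i' j' hij z hz1 hz2
  refine ⟨P, hsys, ?_⟩
  have hsub : coverSet L ⊆ coverSet P := by
    rintro z ⟨j0, hz⟩
    by_cases hj : j0 = i
    · subst hj
      exact ⟨j0, by rw [hPi']; exact (hmemnew z).2 (Or.inl hz)⟩
    · exact ⟨j0, by rw [hPj j0 hj]; exact hz⟩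
  have hx0 : q.head hq ∈ q := List.head_mem hq
  refine Set.ncard_lt_ncard ⟨hsub, fun hss => ?_⟩ (Set.toFinite _)
  exact hqH _ hx0 (hss ⟨i, by rw [hPi']; exact (hmemnew _).2 (Or.inr hx0)⟩)

theorem stmt_4 {V : Type*} [Fintype V] (A : V → V → Prop)
    (hirr : Irreflexive A) (hsc : Semicomplete A)
    (k : ℕ) (hk : 2 ≤ k)
    (hcard : (9 * k) ^ 5 ≤ Fintype.card V)
    (hdeg : ∀ v : V, (Fintype.card V + k) / 2 ≤ {w : V | A v w}.ncard ∧
      (Fintype.card V + k) / 2 ≤ {w : V | A w v}.ncard)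
    (s : V) (t : Fin k → V) (htinj : Function.Injective t)
    (hst : ∀ i, t i ≠ s)
    (L : Fin k → List V) (hL : IsSTSystem A s t L)
    (hmax : ∀ P : Fin k → List V, IsSTSystem A s t P →
      (coverSet P).ncard ≤ (coverSet L).ncard)
    (hncov : coverSet L ≠ Set.univ)
    (VH : Set V) (hVH : VH = (coverSet L)ᶜ) :
    VH.ncard ≤ (Fintype.card V - k + 1) / 2 - 1 ∧
    (Fintype.card V + k) / 2 + 1 ≤ (coverSet L).ncard := by
  classical
  have hkn : 9 * k ≤ Fintype.card V := le_trans (Nat.le_self_pow (by norm_num) _) hcard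
  have hcompl : (coverSet L).ncard + VH.ncard = Fintype.card V := by
    rw [hVH, ← Nat.card_eq_fintype_card]
    exact Set.ncard_add_ncard_compl _
  suffices h2 : (Fintype.card V + k) / 2 + 1 ≤ (coverSet L).ncard by
    exact ⟨by omega, h2⟩
  by_contra hlt
  push_neg at hlt
  have hm : (coverSet L).ncard ≤ (Fintype.card V + k) / 2 := by omega
  have i0 : Fin k := ⟨0, by omega⟩
  have hsLi0 : s ∈ L i0 :=
    List.mem_of_mem_head? (by rw [(hL.1 i0).2.2.2.1]; rfl)
  have hsmem : s ∈ coverSet L := ⟨i0, hsLi0⟩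
  have hmpos : 0 < (coverSet L).ncard := (Set.ncard_pos (Set.toFinite _)).2 ⟨s, hsmem⟩
  obtain ⟨h00, hh00⟩ := (Set.ne_univ_iff_exists_notMem _).1 hncov
  set Hs := (coverSet L)ᶜ with hHs
  have hHsne : Hs.Nonempty := ⟨h00, hh00⟩
  set r := fun a b => A a b ∧ a ∈ Hs ∧ b ∈ Hs with hr
  obtain ⟨h₀, hh₀, hking⟩ := exists_king hsc Hs hHsne
  have hscop : Semicomplete (fun a b => A b a) := fun x y hxy => Or.symm (hsc x y hxy)
  obtain ⟨h₁, hh₁, hcok⟩ := exists_king hscop Hs hHsne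
  have hcoking : ∀ x ∈ Hs, Relation.ReflTransGen r x h₁ := by
    intro x hx
    have h2 := Relation.ReflTransGen.mono
      (fun a b (hb : A b a ∧ a ∈ Hs ∧ b ∈ Hs) => (show r b a from ⟨hb.1, hb.2.2, hb.2.1⟩)) _ _ (hcok x hx)
    exact Relation.reflTransGen_swap.1 h2
  -- every covered vertex has an in-neighbour and an out-neighbour outside the cover
  have hin : ∀ v ∈ coverSet L, ∃ y, A y v ∧ y ∈ Hs := by
    intro v hv
    by_contra hcon
    push_neg at hcon
    have hsub : {w | A w v} ⊆ coverSet L \ {v} := by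
      intro w hw
      refine ⟨?_, ?_⟩
      · have h3 := hcon w hw
        simp [hHs] at h3
        exact h3
      · intro h
        exact hirr v (by rwa [Set.mem_singleton_iff.1 h] at hw)
    have h1 := Set.ncard_le_ncard hsub (Set.toFinite _)
    rw [Set.ncard_diff_singleton_of_mem hv] at h1
    have h2 := (hdeg v).2
    omega
  have hout : ∀ u ∈ coverSet L, ∃ x, A u x ∧ x ∈ Hs := by
    intro u hu
    by_contra hcon
    push_neg at hcon
    have hsub : {w | A u w} ⊆ coverSet L \ {u} := by
      intro w hw
      refine ⟨?_, ?_⟩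
      · have h3 := hcon w hw
        simp [hHs] at h3
        exact h3
      · intro h
        exact hirr u (by rwa [Set.mem_singleton_iff.1 h] at hw)
    have h1 := Set.ncard_le_ncard hsub (Set.toFinite _)
    rw [Set.ncard_diff_singleton_of_mem hu] at h1
    have h2 := (hdeg u).1
    omega
  -- splicing a reachability pair into the system contradicts maximality
  have hspot : ∀ (u v x y : V), (∃ j l1 l2, L j = l1 ++ u :: v :: l2) →
      A u x → x ∈ Hs → Relation.ReflTransGen r x y → A y v → False := by
    rintro u v x y ⟨j, l1, l2, hdec⟩ hux hxH hxy hyv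
    obtain ⟨q, hqne, hqnd, hqc, hqh, hql, hqm⟩ := exists_nodup_chain r hxy
    have hqH : ∀ z ∈ q, z ∉ coverSet L := by
      intro z hz
      rcases hqm z hz with h | ⟨w, hw⟩
      · subst h; exact hxH
      · exact hw.2.2
    obtain ⟨P, hPsys, hPlt⟩ := insert_grows hL j l1 l2 u v hdec q hqne hqnd
      (hqc.imp (fun a b h => h.1)) hqH
      (fun x' hx' => by
        rw [hqh] at hx'
        obtain rfl := Option.some.inj hx'
        exact hux)
      (fun y' hy' => by
        rw [hql] at hy'
        obtain rfl := Option.some.inj hy'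
        exact hyv)
    exact absurd (hmax P hPsys) (Nat.not_le.2 hPlt)
  by_cases hzz : ∃ z ∈ Hs, (∀ y ∈ Hs, Relation.ReflTransGen r z y) ∧
      ∀ x ∈ Hs, Relation.ReflTransGen r x z
  · -- H "strongly connected through z": splice right after s on path i0
    obtain ⟨z, hzH, hz1, hz2⟩ := hzz
    have hlastne : (L i0).getLast? ≠ some s := by
      rw [(hL.1 i0).2.2.2.2]
      intro h
      exact hst i0 (Option.some.inj h)
    obtain ⟨l1, v, l2, hdec⟩ := exists_succ_decomp hsLi0 hlastne
    have hvcov : v ∈ coverSet L := ⟨i0, by rw [hdec]; simp⟩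
    obtain ⟨x, hsx, hxH⟩ := hout s hsmem
    obtain ⟨y, hyv, hyH⟩ := hin v hvcov
    exact hspot s v x y ⟨i0, l1, l2, hdec⟩ hsx hxH ((hz2 x hxH).trans (hz1 y hyH)) hyv
  · push_neg at hzz
    set B0 := {z | z ∈ Hs ∧ ∀ y ∈ Hs, Relation.ReflTransGen r z y} with hB0
    set B1 := {z | z ∈ Hs ∧ ∀ x ∈ Hs, Relation.ReflTransGen r x z} with hB1
    have hdisj : ∀ z, z ∈ B0 → z ∈ B1 → False := by
      rintro z ⟨hzH, hz1⟩ ⟨_, hz2⟩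
      obtain ⟨x, hx, hnx⟩ := hzz z hzH hz1
      exact hnx (hz2 x hx)
    have hh0B : h₀ ∈ B0 := ⟨hh₀, hking⟩
    have hh1B : h₁ ∈ B1 := ⟨hh₁, hcoking⟩
    have hc1 : {w | A w h₀} ⊆ Set.range t ∪ (B0 \ {h₀}) := by
      intro w hw
      by_cases hwc : w ∈ coverSet L
      · left
        by_contra hurange
        obtain ⟨j, hj⟩ := hwc
        have hwlast : (L j).getLast? ≠ some w := by
          rw [(hL.1 j).2.2.2.2]
          intro h
          exact hurange ⟨j, Option.some.inj h⟩
        obtain ⟨l1, v, l2, hdec⟩ := exists_succ_decomp hj hwlast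
        obtain ⟨y, hyv, hyH⟩ := hin v ⟨j, by rw [hdec]; simp⟩
        exact hspot w v h₀ y ⟨j, l1, l2, hdec⟩ hw hh₀ (hking y hyH) hyv
      · right
        have hwH : w ∈ Hs := hwc
        refine ⟨⟨hwH, fun y hy =>
          (Relation.ReflTransGen.single ⟨hw, hwH, hh₀⟩).trans (hking y hy)⟩, ?_⟩
        intro h
        exact hirr h₀ (by rwa [Set.mem_singleton_iff.1 h] at hw)
    have hb0card : (Fintype.card V + k) / 2 ≤ k + (B0.ncard - 1) := by
      have h1 := Set.ncard_le_ncard hc1 (Set.toFinite _)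
      have h2 := Set.ncard_union_le (Set.range t) (B0 \ {h₀})
      have h3 : (Set.range t).ncard ≤ k := by
        rw [← Set.image_univ]
        refine le_trans (Set.ncard_image_le (Set.toFinite _)) ?_
        simp [Set.ncard_univ]
      have h4 : (B0 \ {h₀}).ncard = B0.ncard - 1 := Set.ncard_diff_singleton_of_mem hh0B
      have h5 := (hdeg h₀).2
      omega
    have hc2 : {w | A h₁ w} ⊆ {s} ∪ (B1 \ {h₁}) := by
      intro w hw
      by_cases hwc : w ∈ coverSet L
      · left
        by_contra hws
        obtain ⟨j, hj⟩ := hwc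
        obtain ⟨l1, u, l2, hdec⟩ := exists_pred_decomp hj (hL.1 j).2.2.2.1
          (by simpa using hws)
        obtain ⟨x, hux, hxH⟩ := hout u ⟨j, by rw [hdec]; simp⟩
        exact hspot u w x h₁ ⟨j, l1, l2, hdec⟩ hux hxH (hcoking x hxH) hw
      · right
        have hwH : w ∈ Hs := hwc
        refine ⟨⟨hwH, fun x hx =>
          (hcoking x hx).trans (Relation.ReflTransGen.single ⟨hw, hh₁, hwH⟩)⟩, ?_⟩
        intro h
        exact hirr h₁ (by rwa [Set.mem_singleton_iff.1 h] at hw)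
    have hb1card : (Fintype.card V + k) / 2 ≤ 1 + (B1.ncard - 1) := by
      have h1 := Set.ncard_le_ncard hc2 (Set.toFinite _)
      have h2 := Set.ncard_union_le ({s} : Set V) (B1 \ {h₁})
      have h3 : ({s} : Set V).ncard = 1 := Set.ncard_singleton s
      have h4 : (B1 \ {h₁}).ncard = B1.ncard - 1 := Set.ncard_diff_singleton_of_mem hh1B
      have h5 := (hdeg h₁).1
      omega
    have hdisj' : Disjoint B0 B1 := Set.disjoint_left.2 (fun {z} hz1 hz2 => hdisj z hz1 hz2)
    have hBsub : B0 ∪ B1 ⊆ Hs := by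
      rintro z (hz | hz)
      · exact hz.1
      · exact hz.1
    have h6 : B0.ncard + B1.ncard ≤ Hs.ncard := by
      rw [← Set.ncard_union_eq hdisj' (Set.toFinite _) (Set.toFinite _)]
      exact Set.ncard_le_ncard hBsub (Set.toFinite _)
    have h7 : (coverSet L).ncard + Hs.ncard = Fintype.card V := by
      rw [hHs, ← Nat.card_eq_fintype_card]
      exact Set.ncard_add_ncard_compl _
    have hb0pos : 0 < B0.ncard := (Set.ncard_pos (Set.toFinite _)).2 ⟨h₀, hh0B⟩
    have hb1pos : 0 < B1.ncard := (Set.ncard_pos (Set.toFinite _)).2 ⟨h₁, hh1B⟩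
    omega
end

section
/- With the setup below, for any vertex u ∈ R that is not the terminal vertex of its path, its successor u⁺ on that path does not belong to F; similarly, for any vertex v ∈ F other than s, its predecessor v⁻ on its path does not belong to R. -/
/-- build a chain' from a property of all splits -/
lemma chain'_of_forall_split {α : Type*} {P : α → α → Prop} :
    ∀ l : List α, (∀ xs a b ys, l = xs ++ a :: b :: ys → P a b) → l.Chain' P := by
  intro l
  induction l with
  | nil => intro _; exact List.isChain_nil
  | cons x xs ih =>
    intro h
    cases xs with
    | nil => exact List.isChain_singleton _
    | cons y t =>
      refine List.isChain_cons_cons.mpr ⟨h [] x y t rfl, ih ?_⟩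
      intro xs' a b ys' hsp
      exact h (x :: xs') a b ys' (by rw [hsp]; rfl)

/-- counting lemma -/
lemma count_bound {α : Type*} (qp pp : α → Bool) :
    ∀ l : List α, l.Chain' (fun a b => ¬(qp a ∧ pp b)) →
      ((l.filter qp).length + (l.filter pp).length ≤ l.length + 1 ∧
       (∀ a, l.head? = some a → pp a = false →
         (l.filter qp).length + (l.filter pp).length ≤ l.length)) := by
  intro l
  induction l with
  | nil => simp
  | cons x xs ih =>
    intro hch
    obtain ⟨ih1, ih2⟩ := ih hch.tail
    have hlink : ∀ y ∈ xs.head?, ¬(qp x ∧ pp y) := (List.isChain_cons.mp hch).1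
    have key : ∀ c : ℕ, c = (if pp x then 1 else 0) →
        ((x :: xs).filter qp).length + ((x :: xs).filter pp).length
          ≤ xs.length + 1 + c := by
      intro c hc
      rcases hh : xs.head? with _ | y
      · have hxs : xs = [] := by
          cases xs with
          | nil => rfl
          | cons h t => simp at hh
        subst hxs
        simp only [List.filter_cons, List.filter_nil]
        cases hqx : qp x <;> cases hpx : pp x <;> simp_all
      · by_cases hpy : pp y = true
        · have hqx : qp x = false := by
            cases hq : qp x
            · rfl
            · exact absurd ⟨hq, hpy⟩ (hlink y hh)
          simp only [List.filter_cons, hqx]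
          cases hpx : pp x <;> simp_all <;> omega
        · have hpy' : pp y = false := by
            cases h : pp y
            · rfl
            · exact absurd h hpy
          have h2 := ih2 y hh hpy'
          simp only [List.filter_cons]
          cases hqx : qp x <;> cases hpx : pp x <;> simp_all <;> omega
    constructor
    · have := key (if pp x then 1 else 0) rfl
      cases hpx : pp x <;> simp_all <;> omega
    · intro a ha hpa
      have hax : x = a := by simpa using ha
      subst hax
      have := key (if pp x then 1 else 0) rfl
      simp only [hpa] at this
      simpa using this

/-- extract a nodup path from reachability within S -/
lemma reach_path {V : Type*} (A : V → V → Prop) (S : Set V) {a b : V}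
    (hab : Relation.ReflTransGen (fun x y => A x y ∧ x ∈ S ∧ y ∈ S) a b)
    (ha : a ∈ S) :
    ∃ q : List V, q ≠ [] ∧ q.Nodup ∧ q.Chain' A ∧ (∀ x ∈ q, x ∈ S) ∧
      q.head? = some a ∧ q.getLast? = some b := by
  induction hab using Relation.ReflTransGen.head_induction_on with
  | refl =>
    exact ⟨[b], by simp, by simp, List.isChain_singleton _, by simpa using ha, rfl, rfl⟩
  | @head a c h' hcb ih =>
    obtain ⟨hac, haS, hcS⟩ := h'
    obtain ⟨q, hne, hnd, hch, hS, hhd, hlast⟩ := ih hcS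
    by_cases haq : a ∈ q
    · obtain ⟨q₁, q₂, rfl⟩ := List.append_of_mem haq
      refine ⟨a :: q₂, by simp, ?_, ?_, ?_, rfl, ?_⟩
      · exact (List.sublist_append_right q₁ (a :: q₂)).nodup hnd
      · exact hch.suffix ⟨q₁, rfl⟩
      · intro x hx; exact hS x (List.mem_append.mpr (Or.inr hx))
      · rw [← List.getLast?_append_cons q₁ a q₂]; exact hlast
    · refine ⟨a :: q, by simp, List.nodup_cons.mpr ⟨haq, hnd⟩, ?_, ?_, rfl, ?_⟩
      · refine List.isChain_cons.mpr ⟨?_, hch⟩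
        intro y hy
        rw [hhd] at hy; simp at hy; subst hy; exact hac
      · intro x hx; rcases List.mem_cons.mp hx with h | h
        · subst h; exact haS
        · exact hS x h
      · rw [show a :: q = [a] ++ q from rfl, List.getLast?_append_of_ne_nil _ hne]
        exact hlast

lemma insert_lemma {V : Type*} [Fintype V] (A : V → V → Prop) {k : ℕ}
    (s : V) (t : Fin k → V) (L : Fin k → List V)
    (hL : IsSTSystem A s t L)
    (hmax : ∀ P : Fin k → List V, IsSTSystem A s t P →
      (coverSet P).ncard ≤ (coverSet L).ncard)
    (i₀ : Fin k) (xs ys q : List V) (a b : V)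
    (hsplit : L i₀ = xs ++ a :: b :: ys)
    (hqne : q ≠ []) (hqnd : q.Nodup) (hqch : q.Chain' A)
    (hqH : ∀ x ∈ q, x ∉ coverSet L)
    (hhead : ∀ h ∈ q.head?, A a h)
    (hlast : ∀ h ∈ q.getLast?, A h b) : False := by
  classical
  set newl : List V := xs ++ a :: (q ++ b :: ys) with hnewl
  set N : Fin k → List V := Function.update L i₀ newl with hN
  have p1 : (a :: (q ++ b :: ys)).Perm (q ++ a :: b :: ys) := List.perm_middle.symm
  have perm : newl.Perm (q ++ L i₀) := by
    rw [hsplit, hnewl]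
    refine (p1.append_left xs).trans ?_
    rw [← List.append_assoc, ← List.append_assoc]
    exact List.Perm.append_right _ List.perm_append_comm
  have memN : ∀ x, x ∈ newl ↔ x ∈ q ∨ x ∈ L i₀ := by
    intro x
    rw [perm.mem_iff, List.mem_append]
  have hold := hL.1 i₀
  have nodupN : newl.Nodup := by
    rw [perm.nodup_iff, List.nodup_append]
    exact ⟨hqnd, hold.2.1, fun x hx y hy hxy => hqH x hx ⟨i₀, hxy ▸ hy⟩⟩
  have chainN : newl.Chain' A := by
    have hch : (xs ++ a :: (b :: ys)).Chain' A := by rw [← hsplit]; exact hold.2.2.1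
    change List.IsChain A (xs ++ a :: b :: ys) at hch
    rw [List.isChain_split] at hch
    change List.IsChain A newl
    rw [hnewl, List.isChain_split]
    refine ⟨hch.1, ?_⟩
    show List.IsChain A ((a :: q) ++ (b :: ys))
    rw [List.isChain_append]
    refine ⟨List.isChain_cons.mpr ⟨hhead, hqch⟩, hch.2.tail, ?_⟩
    intro x hx y hy
    simp only [List.head?_cons, Option.mem_def, Option.some.injEq] at hy
    subst hy
    apply hlast
    rwa [show a :: q = [a] ++ q from rfl, List.getLast?_append_of_ne_nil _ hqne] at hx
  have headN : newl.head? = some s := by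
    have hh := hold.2.2.2.1
    rw [hsplit] at hh
    rw [hnewl]
    cases xs with
    | nil => simpa using hh
    | cons z zs => simpa using hh
  have lastN : newl.getLast? = some (t i₀) := by
    have hh := hold.2.2.2.2
    rw [hsplit] at hh
    rw [show newl = (xs ++ a :: q) ++ (b :: ys) by simp [hnewl]]
    rw [List.getLast?_append_of_ne_nil _ (by simp : (b :: ys) ≠ [])]
    rw [show xs ++ a :: b :: ys = (xs ++ [a]) ++ (b :: ys) by simp] at hh
    rwa [List.getLast?_append_of_ne_nil _ (by simp : (b :: ys) ≠ [])] at hh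
  have hmemN' : ∀ j, j ≠ i₀ → N j = L j := fun j hj => Function.update_of_ne hj _ _
  have hNi₀ : N i₀ = newl := Function.update_self _ _ _
  have hsysN : IsSTSystem A s t N := by
    constructor
    · intro i
      by_cases hi : i = i₀
      · subst hi
        rw [hNi₀]
        exact ⟨by simp [hnewl], nodupN, chainN, headN, lastN⟩
      · rw [hmemN' i hi]; exact hL.1 i
    · intro i j hij v hvi hvj
      by_cases hi : i = i₀
      · subst hi
        rw [hNi₀] at hvi
        rw [hmemN' j (Ne.symm hij)] at hvj
        rcases (memN v).mp hvi with h | h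
        · exact absurd (hqH v h) (by simp; exact ⟨j, hvj⟩)
        · exact hL.2 i j hij v h hvj
      · by_cases hj : j = i₀
        · subst hj
          rw [hNi₀] at hvj
          rw [hmemN' i hi] at hvi
          rcases (memN v).mp hvj with h | h
          · exact absurd (hqH v h) (by simp; exact ⟨i, hvi⟩)
          · exact hL.2 i j hij v hvi h
        · exact hL.2 i j hij v (by rwa [hmemN' i hi] at hvi) (by rwa [hmemN' j hj] at hvj)
  have hsub : coverSet L ⊆ coverSet N := by
    rintro v ⟨i, hv⟩
    by_cases hi : i = i₀
    · subst hi
      exact ⟨i, by rw [hNi₀]; exact (memN v).mpr (Or.inr hv)⟩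
    · exact ⟨i, by rwa [hmemN' i hi]⟩
  have h0 : q.head hqne ∈ q := List.head_mem hqne
  have hstrict : coverSet L ⊂ coverSet N := by
    rw [Set.ssubset_iff_of_subset hsub]
    refine ⟨q.head hqne, ⟨i₀, by rw [hNi₀]; exact (memN _).mpr (Or.inl h0)⟩, hqH _ h0⟩
  exact absurd (hmax N hsysN) (not_le.mpr (Set.ncard_lt_ncard hstrict (Set.toFinite _)))

theorem stmt_5 {V : Type*} [Fintype V] (A : V → V → Prop)
    (hirr : Irreflexive A) (hsc : Semicomplete A)
    (k : ℕ) (hk : 2 ≤ k)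
    (hcard : (9 * k) ^ 5 ≤ Fintype.card V)
    (hdeg : ∀ v : V, (Fintype.card V + k) / 2 ≤ {w : V | A v w}.ncard ∧
      (Fintype.card V + k) / 2 ≤ {w : V | A w v}.ncard)
    (s : V) (t : Fin k → V) (htinj : Function.Injective t)
    (hst : ∀ i, t i ≠ s)
    (L : Fin k → List V) (hL : IsSTSystem A s t L)
    (hmax : ∀ P : Fin k → List V, IsSTSystem A s t P →
      (coverSet P).ncard ≤ (coverSet L).ncard)
    (hncov : coverSet L ≠ Set.univ)
    (VH : Set V) (hVH : VH = (coverSet L)ᶜ)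
    (F R : Set V)
    (hF : F = {x ∈ coverSet L | ∃ y ∈ VH, A y x})
    (hR : R = {x ∈ coverSet L | ∃ y ∈ VH, A x y}) :
    ∀ i, (L i).Chain' (fun u v => ¬ (u ∈ R ∧ v ∈ F)) := by
  classical
  intro i
  apply chain'_of_forall_split
  intro xs u v ys hsplit
  rintro ⟨hu, hv⟩
  rw [hR] at hu
  rw [hF] at hv
  obtain ⟨huc, y, hyH, hAuy⟩ := hu
  obtain ⟨hvc, y', hy'H, hAy'v⟩ := hv
  have hnotCov : ∀ x : V, x ∈ VH ↔ x ∉ coverSet L := by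
    intro x; rw [hVH]; simp
  set Rel : V → V → Prop := fun p r => A p r ∧ p ∈ VH ∧ r ∈ VH with hRel
  by_cases hreach : Relation.ReflTransGen Rel y y'
  · obtain ⟨q, hqne, hqnd, hqch, hqS, hqhd, hqlast⟩ := reach_path A VH hreach hyH
    exact insert_lemma A s t L hL hmax i xs ys q u v hsplit hqne hqnd hqch
      (fun x hx => (hnotCov x).mp (hqS x hx))
      (fun h hh => by rw [hqhd] at hh; simp at hh; subst hh; exact hAuy)
      (fun h hh => by rw [hqlast] at hh; simp at hh; subst hh; exact hAy'v)
  · have hyy' : y ≠ y' := fun h => hreach (h ▸ Relation.ReflTransGen.refl)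
    have hy'y : A y' y := by
      rcases hsc y y' hyy' with h | h
      · exact absurd (Relation.ReflTransGen.single ⟨h, hyH, hy'H⟩) hreach
      · exact h
    have hreach' : Relation.ReflTransGen Rel y' y :=
      Relation.ReflTransGen.single ⟨hy'y, hy'H, hyH⟩
    have key : ∀ (j : Fin k) (xs' : List V) (a b : V) (ys' : List V),
        L j = xs' ++ a :: b :: ys' → ¬(A a y' ∧ A y b) := by
      rintro j xs' a b ys' hsp ⟨h1, h2⟩
      obtain ⟨q, hqne, hqnd, hqch, hqS, hqhd, hqlast⟩ := reach_path A VH hreach' hy'H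
      exact insert_lemma A s t L hL hmax j xs' ys' q a b hsp hqne hqnd hqch
        (fun x hx => (hnotCov x).mp (hqS x hx))
        (fun h hh => by rw [hqhd] at hh; simp at hh; subst hh; exact h1)
        (fun h hh => by rw [hqlast] at hh; simp at hh; subst hh; exact h2)
    -- counting setup
    set n := Fintype.card V with hn
    set l := (coverSet L).ncard with hl
    set hH := VH.ncard with hhH
    set δ := (n + k) / 2 with hδ
    set X : Set V := {x | Relation.ReflTransGen Rel x y'} with hX
    set W : Set V := {x | Relation.ReflTransGen Rel y x} with hW
    have hy'X : y' ∈ X := Relation.ReflTransGen.refl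
    have hyW : y ∈ W := Relation.ReflTransGen.refl
    have hXH : X ⊆ VH := by
      intro x hx
      rcases Relation.ReflTransGen.cases_head hx with h | ⟨c, hc, _⟩
      · exact h ▸ hy'H
      · exact hc.2.1
    have hWH : W ⊆ VH := by
      intro x hx
      rcases Relation.ReflTransGen.cases_tail hx with h | ⟨c, _, hc⟩
      · exact h ▸ hyH
      · exact hc.2.2
    have hdisjXW : Disjoint X W := by
      rw [Set.disjoint_left]
      intro z hzX hzW
      exact hreach (Relation.ReflTransGen.trans hzW hzX)
    have hXWcard : X.ncard + W.ncard ≤ hH := by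
      rw [← Set.ncard_union_eq hdisjXW (Set.toFinite _) (Set.toFinite _)]
      exact Set.ncard_le_ncard (Set.union_subset hXH hWH) (Set.toFinite _)
    set Qs : Set V := {w | w ∈ coverSet L ∧ A w y'} with hQs
    set Ps : Set V := {w | w ∈ coverSet L ∧ A y w ∧ w ≠ s} with hPs
    have hQbound : δ + 1 ≤ X.ncard + Qs.ncard := by
      have hsub2 : {w : V | A w y'} ⊆ (X \ {y'}) ∪ Qs := by
        intro w hw
        by_cases hwc : w ∈ coverSet L
        · exact Or.inr ⟨hwc, hw⟩
        · have hwH : w ∈ VH := (hnotCov w).mpr hwc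
          refine Or.inl ⟨Relation.ReflTransGen.single ⟨hw, hwH, hy'H⟩, ?_⟩
          simp only [Set.mem_singleton_iff]
          intro hwy
          rw [hwy] at hw
          exact hirr _ hw
      have h1 : δ ≤ ({w : V | A w y'}).ncard := (hdeg y').2
      have h2 := Set.ncard_le_ncard hsub2 (Set.toFinite _)
      have h3 := Set.ncard_union_le (X \ {y'}) Qs
      have h4 : (X \ {y'}).ncard + 1 = X.ncard :=
        Set.ncard_diff_singleton_add_one hy'X (Set.toFinite _)
      omega
    have hPbound : δ ≤ W.ncard + Ps.ncard := by
      have hsub2 : {w : V | A y w} ⊆ ((W \ {y}) ∪ Ps) ∪ {s} := by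
        intro w hw
        by_cases hws : w = s
        · exact Or.inr (by simp [hws])
        by_cases hwc : w ∈ coverSet L
        · exact Or.inl (Or.inr ⟨hwc, hw, hws⟩)
        · have hwH : w ∈ VH := (hnotCov w).mpr hwc
          refine Or.inl (Or.inl ⟨Relation.ReflTransGen.single ⟨hw, hyH, hwH⟩, ?_⟩)
          simp only [Set.mem_singleton_iff]
          intro hwy
          rw [hwy] at hw
          exact hirr _ hw
      have h1 : δ ≤ ({w : V | A y w}).ncard := (hdeg y).1
      have h2 := Set.ncard_le_ncard hsub2 (Set.toFinite _)
      have h3 := Set.ncard_union_le ((W \ {y}) ∪ Ps) {s}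
      have h3' := Set.ncard_union_le (W \ {y}) Ps
      have h4 : (W \ {y}).ncard + 1 = W.ncard :=
        Set.ncard_diff_singleton_add_one hyW (Set.toFinite _)
      have h5 : ({s} : Set V).ncard = 1 := Set.ncard_singleton s
      omega
    -- upper bound via per-path counting
    set qp : V → Bool := fun x => decide (A x y') with hqp
    set pp : V → Bool := fun x => decide (A y x ∧ x ≠ s) with hpp
    have hchain : ∀ j : Fin k, (L j).Chain' (fun a b => ¬(qp a ∧ pp b)) := by
      intro j
      apply chain'_of_forall_split
      intro xs' a b ys' hsp
      rintro ⟨h1, h2⟩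
      rw [hqp] at h1
      rw [hpp] at h2
      simp only [decide_eq_true_eq] at h1 h2
      exact key j xs' a b ys' hsp ⟨h1, h2.1⟩
    have hcount : ∀ j : Fin k,
        ((L j).filter qp).length + ((L j).filter pp).length ≤ (L j).length := by
      intro j
      obtain ⟨_, h2⟩ := count_bound qp pp (L j) (hchain j)
      exact h2 s (hL.1 j).2.2.2.1 (by rw [hpp]; simp)
    have hQsum : Qs.ncard ≤ ∑ j : Fin k, ((L j).filter qp).length := by
      have hfin : Qs.Finite := Set.toFinite _
      rw [Set.ncard_eq_toFinset_card _ hfin]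
      have hsubF : hfin.toFinset ⊆
          Finset.univ.biUnion (fun j => ((L j).filter qp).toFinset) := by
        intro w hw
        rw [Set.Finite.mem_toFinset] at hw
        obtain ⟨⟨j, hj⟩, hA⟩ := hw
        simp only [Finset.mem_biUnion, Finset.mem_univ, true_and, List.mem_toFinset,
          List.mem_filter]
        exact ⟨j, hj, by rw [hqp]; simpa using hA⟩
      calc hfin.toFinset.card ≤ _ := Finset.card_le_card hsubF
        _ ≤ ∑ j, ((L j).filter qp).toFinset.card := Finset.card_biUnion_le
        _ ≤ ∑ j : Fin k, ((L j).filter qp).length :=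
            Finset.sum_le_sum (fun j _ => List.toFinset_card_le _)
    have hPsum : Ps.ncard ≤ ∑ j : Fin k, ((L j).filter pp).length := by
      have hfin : Ps.Finite := Set.toFinite _
      rw [Set.ncard_eq_toFinset_card _ hfin]
      have hsubF : hfin.toFinset ⊆
          Finset.univ.biUnion (fun j => ((L j).filter pp).toFinset) := by
        intro w hw
        rw [Set.Finite.mem_toFinset] at hw
        obtain ⟨⟨j, hj⟩, hA⟩ := hw
        simp only [Finset.mem_biUnion, Finset.mem_univ, true_and, List.mem_toFinset,
          List.mem_filter]
        exact ⟨j, hj, by rw [hpp]; simpa using hA⟩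
      calc hfin.toFinset.card ≤ _ := Finset.card_le_card hsubF
        _ ≤ ∑ j, ((L j).filter pp).toFinset.card := Finset.card_biUnion_le
        _ ≤ ∑ j : Fin k, ((L j).filter pp).length :=
            Finset.sum_le_sum (fun j _ => List.toFinset_card_le _)
    -- sum of path lengths
    have hsLj : ∀ j : Fin k, s ∈ L j := by
      intro j
      apply List.mem_of_mem_head?
      rw [(hL.1 j).2.2.2.1]
      rfl
    have hlenpos : ∀ j : Fin k, 1 ≤ (L j).length :=
      fun j => List.length_pos_iff.mpr (hL.1 j).1
    have hlensum : ∑ j : Fin k, (L j).length ≤ l - 1 + k := by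
      set coverF := (Set.toFinite (coverSet L)).toFinset with hcF
      have hsC : s ∈ coverF := by
        rw [Set.Finite.mem_toFinset]
        exact ⟨⟨0, by omega⟩, hsLj _⟩
      have hTd : ∀ j : Fin k, ((L j).toFinset.erase s).card = (L j).length - 1 := by
        intro j
        rw [Finset.card_erase_of_mem (List.mem_toFinset.mpr (hsLj j)),
          List.toFinset_card_of_nodup (hL.1 j).2.1]
      have hbiU : (Finset.univ.biUnion fun j : Fin k => (L j).toFinset.erase s).card
          = ∑ j : Fin k, ((L j).toFinset.erase s).card := by
        apply Finset.card_biUnion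
        intro x _ z _ hxz
        rw [Function.onFun, Finset.disjoint_left]
        intro a ha ha'
        rw [Finset.mem_erase, List.mem_toFinset] at ha ha'
        exact ha.1 (hL.2 x z hxz a ha.2 ha'.2)
      have hsubB : (Finset.univ.biUnion fun j : Fin k => (L j).toFinset.erase s)
          ⊆ coverF.erase s := by
        intro w hw
        simp only [Finset.mem_biUnion, Finset.mem_univ, true_and, Finset.mem_erase,
          List.mem_toFinset] at hw
        obtain ⟨j, hws, hwj⟩ := hw
        rw [Finset.mem_erase, Set.Finite.mem_toFinset]
        exact ⟨hws, ⟨j, hwj⟩⟩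
      have hcardCF : coverF.card = l := (Set.ncard_eq_toFinset_card _ _).symm
      have hmain : ∑ j : Fin k, ((L j).length - 1) ≤ l - 1 := by
        calc ∑ j : Fin k, ((L j).length - 1)
            = ∑ j : Fin k, ((L j).toFinset.erase s).card :=
              (Finset.sum_congr rfl (fun j _ => hTd j)).symm
          _ = (Finset.univ.biUnion fun j : Fin k => (L j).toFinset.erase s).card := hbiU.symm
          _ ≤ (coverF.erase s).card := Finset.card_le_card hsubB
          _ = coverF.card - 1 := Finset.card_erase_of_mem hsC
          _ = l - 1 := by rw [hcardCF]
      have hsum' : ∑ j : Fin k, (L j).length = (∑ j : Fin k, ((L j).length - 1)) + k := by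
        have hstep : ∀ j ∈ (Finset.univ : Finset (Fin k)),
            (L j).length = ((L j).length - 1) + 1 :=
          fun j _ => (Nat.succ_pred_eq_of_pos (hlenpos j)).symm
        rw [Finset.sum_congr rfl hstep, Finset.sum_add_distrib, Finset.sum_const,
          Finset.card_univ, Fintype.card_fin, smul_eq_mul, mul_one]
      omega
    have hsl : s ∈ coverSet L := ⟨⟨0, by omega⟩, hsLj _⟩
    have hl1 : 1 ≤ l := by
      rw [hl]
      have := (Set.ncard_pos (Set.toFinite (coverSet L))).mpr ⟨s, hsl⟩
      omega
    have hncomp : l + hH = n := by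
      rw [hl, hhH, hVH, hn]
      rw [Set.ncard_add_ncard_compl (coverSet L) (Set.toFinite _) (Set.toFinite _)]
      exact Nat.card_eq_fintype_card
    have hfinal : ∑ j : Fin k, (((L j).filter qp).length + ((L j).filter pp).length)
        ≤ ∑ j : Fin k, (L j).length := Finset.sum_le_sum (fun j _ => hcount j)
    rw [Finset.sum_add_distrib] at hfinal
    omega
end

section
/- With the setup below, |F ∪ R| = |V(L)| and |F ∩ R| ≤ k. -/
set_option linter.unusedSectionVars false
set_option maxHeartbeats 1000000


/-- walk relation inside the "uncovered" part `Cᶜ` -/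
def HRel {V : Type*} (A : V → V → Prop) (C : Set V) : V → V → Prop :=
  fun u w => w ∉ C ∧ A u w

/-- vertices of `Cᶜ` reachable (within `Cᶜ`) from an out-neighbour of `x` -/
def ReachX {V : Type*} (A : V → V → Prop) (C : Set V) (x : V) : Set V :=
  {h | ∃ y, A x y ∧ y ∉ C ∧ Relation.ReflTransGen (HRel A C) y h}

/-- vertices of `Cᶜ` that can reach (within `Cᶜ`) an in-neighbour of `z` -/
def CoReachX {V : Type*} (A : V → V → Prop) (C : Set V) (z : V) : Set V :=
  {h | h ∉ C ∧ ∃ w, Relation.ReflTransGen (HRel A C) h w ∧ A w z}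

section Lemmas

variable {V : Type*} [Fintype V] {A : V → V → Prop} {k : ℕ} {s : V} {t : Fin k → V}
  {L : Fin k → List V}

lemma head?_append_cons (l₁ : List V) (a : V) (r r' : List V) :
    (l₁ ++ a :: r).head? = (l₁ ++ a :: r').head? := by cases l₁ <;> simp

lemma mem_cover {v : V} {i : Fin k} (hv : v ∈ L i) : v ∈ coverSet L := ⟨i, hv⟩

lemma rtg_not_mem {C : Set V} {y h : V} (hy : y ∉ C)
    (hr : Relation.ReflTransGen (HRel A C) y h) : h ∉ C := by
  induction hr with
  | refl => exact hy
  | tail _ hbc _ => exact hbc.1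

lemma extract {C : Set V} {y h : V} (hy : y ∉ C)
    (hr : Relation.ReflTransGen (HRel A C) y h) :
    ∃ q : List V, q.Nodup ∧ q.Chain' A ∧ (∀ v ∈ q, v ∉ C) ∧
      q.head? = some y ∧ q.getLast? = some h := by
  induction hr with
  | refl => exact ⟨[y], List.nodup_singleton y, List.isChain_singleton y, by simpa using hy, rfl, rfl⟩
  | @tail b c hab hbc ih =>
    obtain ⟨q, hn, hc, hm, hh, hl⟩ := ih
    by_cases hcq : c ∈ q
    · obtain ⟨q₁, q₂, rfl⟩ := List.append_of_mem hcq
      have hassoc : q₁ ++ c :: q₂ = (q₁ ++ [c]) ++ q₂ := by simp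
      refine ⟨q₁ ++ [c], hn.sublist ?_, ?_, ?_, ?_, ?_⟩
      · rw [hassoc]; exact List.sublist_append_left _ _
      · rw [hassoc] at hc; exact hc.left_of_append
      · intro v hv
        exact hm v (by rw [hassoc]; exact List.mem_append.2 (Or.inl hv))
      · rw [← hh]; exact head?_append_cons q₁ c [] q₂
      · simp
    · refine ⟨q ++ [c], ?_, ?_, ?_, ?_, ?_⟩
      · exact List.nodup_append.2 ⟨hn, by simp, by
          intro v hv v' hv'; simp at hv'; subst hv'; intro e; subst e; exact hcq hv⟩
      · refine hc.append (by simp) ?_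
        intro x hx y' hy'
        simp at hy'; subst hy'
        rw [hl] at hx; simp at hx; subst hx
        exact hbc.2
      · intro v hv
        rcases List.mem_append.1 hv with h1 | h1
        · exact hm v h1
        · simp at h1; subst h1; exact hbc.1
      · have : y ∈ (q ++ [c]).head? := List.mem_head?_append_of_mem_head? (by rw [hh]; rfl)
        simpa using this
      · rw [List.getLast?_append_cons]; simp

lemma insert_contra (hL : IsSTSystem A s t L)
    (hmax : ∀ P : Fin k → List V, IsSTSystem A s t P →
      (coverSet P).ncard ≤ (coverSet L).ncard)
    (j : Fin k) (l₁ l₂ : List V) (a b : V) (hsplit : L j = l₁ ++ a :: b :: l₂)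
    (q : List V) (hq : q ≠ []) (hqn : q.Nodup) (hqc : q.Chain' A)
    (hqH : ∀ v ∈ q, v ∉ coverSet L)
    (hah : ∀ h ∈ q.head?, A a h) (hhb : ∀ h ∈ q.getLast?, A h b) : False := by
  classical
  set l' : List V := l₁ ++ a :: (q ++ b :: l₂) with hl'
  have hperm : l'.Perm (L j ++ q) := by
    rw [hsplit, hl']
    have h1 : (q ++ b :: l₂).Perm (b :: l₂ ++ q) := List.perm_append_comm
    have h2 : (l₁ ++ a :: (q ++ b :: l₂)).Perm (l₁ ++ a :: (b :: l₂ ++ q)) :=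
      List.Perm.append_left _ (h1.cons a)
    have e : (l₁ ++ a :: b :: l₂) ++ q = l₁ ++ a :: (b :: l₂ ++ q) := by simp
    rw [e]
    exact h2
  have hmem : ∀ v, v ∈ l' ↔ v ∈ L j ∨ v ∈ q := by
    intro v; rw [hperm.mem_iff, List.mem_append]
  have hdisj : (L j).Disjoint q := fun v hv hvq => hqH v hvq (mem_cover hv)
  have hnodup : l'.Nodup := by
    rw [hperm.nodup_iff]
    exact List.nodup_append.2 ⟨(hL.1 j).2.1, hqn, fun a ha b hb e => hdisj ha (e ▸ hb)⟩
  have hchain : l'.Chain' A := by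
    have hc := (hL.1 j).2.2.1
    rw [hsplit] at hc
    obtain ⟨c₁, c₂, clink⟩ := List.isChain_append.1 hc
    refine List.isChain_append.2 ⟨c₁, ?_, ?_⟩
    · rw [List.isChain_cons]
      constructor
      · intro y' hy'
        rw [List.head?_append_of_ne_nil _ hq] at hy'
        exact hah y' hy'
      · refine List.isChain_append.2 ⟨hqc, (List.isChain_cons_cons.1 c₂).2, ?_⟩
        intro x hx y' hy'
        simp only [List.head?_cons, Option.mem_def, Option.some.injEq] at hy'
        subst hy'
        exact hhb x hx
    · intro x hx y' hy'
      simp only [List.head?_cons, Option.mem_def, Option.some.injEq] at hy'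
      subst hy'
      exact clink x hx a (by rfl)
  have hhead : l'.head? = (L j).head? := by
    rw [hsplit, hl']; exact head?_append_cons l₁ a _ _
  have hlast : l'.getLast? = (L j).getLast? := by
    rw [hsplit, hl']
    have e1 : l₁ ++ a :: (q ++ b :: l₂) = (l₁ ++ a :: q) ++ b :: l₂ := by simp
    rw [e1, List.getLast?_append_cons, List.getLast?_append_cons, List.getLast?_cons_cons]
  have hl'nil : l' ≠ [] := by
    intro h0
    have := (hL.1 j).2.2.2.1
    rw [← hhead, h0] at this
    simp at this
  set P : Fin k → List V := Function.update L j l' with hP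
  have hPsys : IsSTSystem A s t P := by
    constructor
    · intro i
      by_cases hij : i = j
      · subst hij
        rw [hP, Function.update_self]
        exact ⟨hl'nil, hnodup, hchain, by rw [hhead]; exact (hL.1 i).2.2.2.1,
          by rw [hlast]; exact (hL.1 i).2.2.2.2⟩
      · rw [hP, Function.update_of_ne hij]; exact hL.1 i
    · intro i i' hne v hvi hvi'
      by_cases hij : i = j
      · subst hij
        rw [hP, Function.update_self] at hvi
        rw [hP, Function.update_of_ne (Ne.symm hne)] at hvi'
        rcases (hmem v).1 hvi with h1 | h1
        · exact hL.2 _ i' hne v h1 hvi'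
        · exact absurd (mem_cover hvi') (hqH v h1)
      · rw [hP, Function.update_of_ne hij] at hvi
        by_cases hi'j : i' = j
        · subst hi'j
          rw [hP, Function.update_self] at hvi'
          rcases (hmem v).1 hvi' with h1 | h1
          · exact hL.2 i i' hne v hvi h1
          · exact absurd (mem_cover hvi) (hqH v h1)
        · rw [hP, Function.update_of_ne hi'j] at hvi'
          exact hL.2 i i' hne v hvi hvi'
  have hsub : coverSet L ⊆ coverSet P := by
    rintro v ⟨i, hv⟩
    by_cases hij : i = j
    · exact ⟨j, by rw [hP, Function.update_self]; exact (hmem v).2 (Or.inl (hij ▸ hv))⟩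
    · exact ⟨i, by rw [hP, Function.update_of_ne hij]; exact hv⟩
  obtain ⟨h0, hh0⟩ := List.exists_mem_of_ne_nil q hq
  have hssub : coverSet L ⊂ coverSet P := by
    refine ⟨hsub, fun hPL => hqH h0 hh0 (hPL ⟨j, ?_⟩)⟩
    rw [hP, Function.update_self]
    exact (hmem h0).2 (Or.inr hh0)
  exact absurd (hmax P hPsys) (Set.ncard_lt_ncard hssub (Set.toFinite _)).not_ge

lemma no_hpath (hL : IsSTSystem A s t L)
    (hmax : ∀ P : Fin k → List V, IsSTSystem A s t P →
      (coverSet P).ncard ≤ (coverSet L).ncard)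
    {j : Fin k} {l₁ l₂ : List V} {a b : V} (hsplit : L j = l₁ ++ a :: b :: l₂)
    {y h : V} (hy : y ∉ coverSet L) (hay : A a y)
    (hr : Relation.ReflTransGen (HRel A (coverSet L)) y h) (hhb : A h b) : False := by
  obtain ⟨q, hn, hc, hm, hh, hl⟩ := extract hy hr
  refine insert_contra hL hmax j l₁ l₂ a b hsplit q ?_ hn hc hm ?_ ?_
  · intro h0; rw [h0] at hh; simp at hh
  · intro x hx; rw [hh] at hx; simp at hx; subst hx; exact hay
  · intro x hx; rw [hl] at hx; simp at hx; subst hx; exact hhb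

lemma reach_not_cover {x h : V} (hh : h ∈ ReachX A (coverSet L) x) : h ∉ coverSet L := by
  obtain ⟨y, _, hy, hr⟩ := hh
  exact rtg_not_mem hy hr

lemma reach_extend {C : Set V} {x h h' : V} (hh : h ∈ ReachX A C x) (hn : h' ∉ C)
    (ha : A h h') : h' ∈ ReachX A C x := by
  obtain ⟨y, h1, h2, h3⟩ := hh
  exact ⟨y, h1, h2, h3.tail ⟨hn, ha⟩⟩

lemma reach_trans {C : Set V} {x h h' : V} (hh : h ∈ ReachX A C x)
    (hr : Relation.ReflTransGen (HRel A C) h h') : h' ∈ ReachX A C x := by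
  obtain ⟨y, h1, h2, h3⟩ := hh
  exact ⟨y, h1, h2, h3.trans hr⟩

lemma reach_step (hsc : Semicomplete A) (hL : IsSTSystem A s t L)
    (hmax : ∀ P : Fin k → List V, IsSTSystem A s t P →
      (coverSet P).ncard ≤ (coverSet L).ncard)
    {j : Fin k} {l₁ l₂ : List V} {a b : V} (hsplit : L j = l₁ ++ a :: b :: l₂) :
    ReachX A (coverSet L) a ⊆ ReachX A (coverSet L) b := by
  intro h hh
  obtain ⟨y, hay, hy, hr⟩ := hh
  have hnb : ¬ A h b := fun hab => no_hpath hL hmax hsplit hy hay hr hab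
  have hhc : h ∉ coverSet L := rtg_not_mem hy hr
  have hbmem : b ∈ coverSet L := ⟨j, by rw [hsplit]; simp⟩
  have hne : h ≠ b := fun e => hhc (e ▸ hbmem)
  rcases hsc h b hne with h1 | h2
  · exact absurd h1 hnb
  · exact ⟨h, h2, hhc, Relation.ReflTransGen.refl⟩

lemma costep (hsc : Semicomplete A) (hL : IsSTSystem A s t L)
    (hmax : ∀ P : Fin k → List V, IsSTSystem A s t P →
      (coverSet P).ncard ≤ (coverSet L).ncard)
    {j : Fin k} {l₁ l₂ : List V} {a b : V} (hsplit : L j = l₁ ++ a :: b :: l₂) :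
    CoReachX A (coverSet L) b ⊆ CoReachX A (coverSet L) a := by
  intro h hh
  obtain ⟨hhC, w', hr, hw'b⟩ := hh
  have hna : ¬ A a h := fun hah => no_hpath hL hmax hsplit hhC hah hr hw'b
  have hamem : a ∈ coverSet L := ⟨j, by rw [hsplit]; simp⟩
  have hne : a ≠ h := fun e => hhC (e ▸ hamem)
  rcases hsc a h hne with h1 | h2
  · exact absurd h1 hna
  · exact ⟨hhC, h, Relation.ReflTransGen.refl, h2⟩

lemma before_pred (hsc : Semicomplete A) (hL : IsSTSystem A s t L)
    (hmax : ∀ P : Fin k → List V, IsSTSystem A s t P →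
      (coverSet P).ncard ≤ (coverSet L).ncard)
    {j : Fin k} {w : V} {l₃ : List V} :
    ∀ (l₂ l₁ : List V) (x : V), L j = l₁ ++ x :: l₂ ++ w :: l₃ →
      ∃ a l₁', L j = l₁' ++ a :: w :: l₃ ∧
        ReachX A (coverSet L) x ⊆ ReachX A (coverSet L) a := by
  intro l₂
  induction l₂ with
  | nil => exact fun l₁ x hsplit => ⟨x, l₁, by simpa using hsplit, subset_rfl⟩
  | cons c l₂' ih =>
    intro l₁ x hsplit
    have hsplit' : L j = l₁ ++ x :: c :: (l₂' ++ w :: l₃) := by rw [hsplit]; simp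
    have hstep := reach_step hsc hL hmax hsplit'
    obtain ⟨a, l₁', h1, h2⟩ := ih (l₁ ++ [x]) c (by rw [hsplit]; simp)
    exact ⟨a, l₁', h1, hstep.trans h2⟩

lemma before_succ (hsc : Semicomplete A) (hL : IsSTSystem A s t L)
    (hmax : ∀ P : Fin k → List V, IsSTSystem A s t P →
      (coverSet P).ncard ≤ (coverSet L).ncard)
    {j : Fin k} {z : V} {l₃ : List V} :
    ∀ (m₂ m₁ : List V) (w : V), L j = m₁ ++ w :: m₂ ++ z :: l₃ →
      ∃ b r, L j = m₁ ++ w :: b :: r ∧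
        CoReachX A (coverSet L) z ⊆ CoReachX A (coverSet L) b := by
  intro m₂
  induction m₂ with
  | nil => exact fun m₁ w hsplit => ⟨z, l₃, by simpa using hsplit, subset_rfl⟩
  | cons c m₂' ih =>
    intro m₁ w hsplit
    obtain ⟨b', r', h1, h2⟩ := ih (m₁ ++ [w]) c (by rw [hsplit]; simp)
    have hco : CoReachX A (coverSet L) b' ⊆ CoReachX A (coverSet L) c :=
      costep hsc hL hmax h1
    exact ⟨c, m₂' ++ z :: l₃, by rw [hsplit]; simp, h2.trans hco⟩

lemma reach_comp (hsc : Semicomplete A) {C : Set V} (u v : V) :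
    ReachX A C u ⊆ ReachX A C v ∨ ReachX A C v ⊆ ReachX A C u := by
  by_contra hcon
  push_neg at hcon
  obtain ⟨h1, h2⟩ := hcon
  obtain ⟨a, hau, hav⟩ := Set.not_subset.1 h1
  obtain ⟨a', ha'v, ha'u⟩ := Set.not_subset.1 h2
  have haC' : a ∉ C := by obtain ⟨_, _, hC, hr⟩ := hau; exact rtg_not_mem hC hr
  have ha'C' : a' ∉ C := by obtain ⟨_, _, hC, hr⟩ := ha'v; exact rtg_not_mem hC hr
  have hne : a ≠ a' := fun e => hav (e ▸ ha'v)
  rcases hsc a a' hne with hx | hx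
  · exact ha'u (reach_extend hau ha'C' hx)
  · exact hav (reach_extend ha'v haC' hx)

lemma two_mem_split {l : List V} {w w' : V} (h : w ∈ l) (h' : w' ∈ l) (hne : w ≠ w') :
    (∃ u m v, l = u ++ w :: m ++ w' :: v) ∨ (∃ u m v, l = u ++ w' :: m ++ w :: v) := by
  obtain ⟨u, r, rfl⟩ := List.append_of_mem h
  rcases List.mem_append.1 h' with hu | hr
  · obtain ⟨u₁, u₂, rfl⟩ := List.append_of_mem hu
    exact Or.inr ⟨u₁, u₂, r, by simp⟩
  · rcases List.mem_cons.1 hr with he | hr'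
    · exact absurd he.symm hne
    · obtain ⟨m, v, rfl⟩ := List.append_of_mem hr'
      exact Or.inl ⟨u, m, v, by simp⟩

def BadPair {V : Type*} (A : V → V → Prop) {k : ℕ} (L : Fin k → List V) (x z : V) : Prop :=
  (∃ (j : Fin k) (l₁ l₂ l₃ : List V), L j = l₁ ++ x :: l₂ ++ z :: l₃) ∧
  (∃ y, y ∉ coverSet L ∧ A x y) ∧ (∃ y', y' ∉ coverSet L ∧ A y' z)

lemma bad_step (hirr : Irreflexive A) (hsc : Semicomplete A)
    (hk : 2 ≤ k) (hcard : (9 * k) ^ 5 ≤ Fintype.card V)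
    (hdeg : ∀ v : V, (Fintype.card V + k) / 2 ≤ {w : V | A v w}.ncard ∧
      (Fintype.card V + k) / 2 ≤ {w : V | A w v}.ncard)
    (hL : IsSTSystem A s t L)
    (hmax : ∀ P : Fin k → List V, IsSTSystem A s t P →
      (coverSet P).ncard ≤ (coverSet L).ncard)
    {x z : V} (hbad : BadPair A L x z) :
    ∃ x' z', BadPair A L x' z' ∧
      ((coverSet L)ᶜ \ ReachX A (coverSet L) x').ncard
        < ((coverSet L)ᶜ \ ReachX A (coverSet L) x).ncard := by
  classical
  obtain ⟨⟨j, l₁, l₂, l₃, hsplit⟩, ⟨y, hyC, hxy⟩, ⟨y', hy'C, hy'z⟩⟩ := hbad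
  set C := coverSet L with hC
  have hyR : y ∈ ReachX A C x := ⟨y, hxy, hyC, Relation.ReflTransGen.refl⟩
  have hy'Co : y' ∈ CoReachX A C z := ⟨hy'C, y', Relation.ReflTransGen.refl, hy'z⟩
  obtain ⟨a, l₁', hsplit', hsub⟩ := before_pred hsc hL hmax l₂ l₁ x hsplit
  have hdisjRC : ∀ h, h ∈ ReachX A C x → h ∈ CoReachX A C z → False := by
    intro h hhR hhCo
    obtain ⟨y₀, hay₀, hy₀C, hr₀⟩ := hsub hhR
    obtain ⟨hhc, w', hrw, hw'z⟩ := hhCo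
    exact no_hpath hL hmax hsplit' hy₀C hay₀ (hr₀.trans hrw) hw'z
  have hyy' : ¬ A y y' := fun hA => hdisjRC y' (reach_extend hyR hy'C hA) hy'Co
  have hyne : y ≠ y' := by
    intro e; subst e; exact hdisjRC y hyR hy'Co
  set S₁ := {w : V | A y w} with hS₁
  set S₂ := {w : V | A w y'} with hS₂
  -- counting
  have hsubU : S₁ ∪ S₂ ⊆ ({y, y'}ᶜ : Set V) := by
    intro v hv hmem
    simp only [Set.mem_insert_iff, Set.mem_singleton_iff] at hmem
    have hv' : A y v ∨ A v y' := hv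
    rcases hmem with rfl | rfl
    · rcases hv' with h | h
      · exact hirr v h
      · exact hyy' h
    · rcases hv' with h | h
      · exact hyy' h
      · exact hirr v h
  have hcompl2 : ({y, y'} : Set V).ncard + (({y, y'} : Set V)ᶜ).ncard = Fintype.card V := by
    rw [Set.ncard_add_ncard_compl, Nat.card_eq_fintype_card]
  have h2 : ({y, y'} : Set V).ncard = 2 := Set.ncard_pair hyne
  have hUcard : (S₁ ∪ S₂).ncard ≤ Fintype.card V - 2 := by
    have := Set.ncard_le_ncard hsubU (Set.toFinite _)
    omega
  have hIE := Set.ncard_union_add_ncard_inter S₁ S₂ (Set.toFinite _) (Set.toFinite _)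
  have hd1 := (hdeg y).1
  have hd2 := (hdeg y').2
  have hn4 : 2 * k + 4 ≤ Fintype.card V := by
    have h9 : 9 * k ≤ (9 * k) ^ 5 := Nat.le_self_pow (by norm_num) _
    omega
  have hM : k + 1 ≤ (S₁ ∩ S₂).ncard := by
    rw [← hS₁] at hd1
    rw [← hS₂] at hd2
    omega
  -- midpoints lie on the cover, but not on path j
  have hmid : ∀ w ∈ S₁ ∩ S₂, w ∈ coverSet L ∧ w ∉ L j := by
    rintro w ⟨hw1, hw2⟩
    simp only [hS₁, Set.mem_setOf_eq] at hw1
    simp only [hS₂, Set.mem_setOf_eq] at hw2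
    constructor
    · by_contra hwC
      exact hdisjRC w (reach_extend hyR hwC hw1)
        ⟨hwC, y', Relation.ReflTransGen.single ⟨hy'C, hw2⟩, hy'z⟩
    · intro hwj
      have hLj : L j = (l₁ ++ x :: l₂) ++ z :: l₃ := by rw [hsplit]; try simp
      rw [hLj] at hwj
      rcases List.mem_append.1 hwj with hE | hT
      · obtain ⟨m₁, m₂, hm⟩ := List.append_of_mem hE
        have hsp : L j = m₁ ++ w :: m₂ ++ z :: l₃ := by rw [hLj, hm]; try simp
        obtain ⟨b, r, hsp2, hco⟩ := before_succ hsc hL hmax m₂ m₁ w hsp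
        obtain ⟨hy'c2, w'', hrw'', hw''b⟩ := hco hy'Co
        exact no_hpath hL hmax hsp2 hy'c2 hw2 hrw'' hw''b
      · obtain ⟨m₁, m₂, hm⟩ := List.append_of_mem hT
        have hsp : L j = l₁ ++ x :: (l₂ ++ m₁) ++ w :: m₂ := by rw [hsplit, hm]; try simp
        obtain ⟨a', l₁'', hsp2, hsub2⟩ := before_pred hsc hL hmax (l₂ ++ m₁) l₁ x hsp
        obtain ⟨y₀, hay₀, hy₀C, hr₀⟩ := hsub2 hyR
        exact no_hpath hL hmax hsp2 hy₀C hay₀ hr₀ hw1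
  -- pigeonhole: two midpoints on a common path
  set f : V → Fin k := fun w => if hw : w ∈ coverSet L then hw.choose else j with hf
  have hfspec : ∀ w ∈ S₁ ∩ S₂, w ∈ L (f w) ∧ f w ≠ j := by
    intro w hw
    have hwC := (hmid w hw).1
    have hfw : f w = hwC.choose := by rw [hf]; exact dif_pos hwC
    have hwL : w ∈ L (f w) := by rw [hfw]; exact hwC.choose_spec
    exact ⟨hwL, fun he => (hmid w hw).2 (he ▸ hwL)⟩
  have hninj : ¬ Set.InjOn f (S₁ ∩ S₂) := by
    intro hinj
    have himg : f '' (S₁ ∩ S₂) ⊆ {i : Fin k | i ≠ j} := by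
      rintro i ⟨w, hw, rfl⟩; exact (hfspec w hw).2
    have h1 : (S₁ ∩ S₂).ncard = (f '' (S₁ ∩ S₂)).ncard :=
      (Set.ncard_image_of_injOn hinj).symm
    have h2' : (f '' (S₁ ∩ S₂)).ncard ≤ ({i : Fin k | i ≠ j}).ncard :=
      Set.ncard_le_ncard himg (Set.toFinite _)
    have h3 : ({i : Fin k | i ≠ j}).ncard = k - 1 := by
      have he : ({i : Fin k | i ≠ j}) = ({j} : Set (Fin k))ᶜ := by ext; simp
      have h4 : ({j} : Set (Fin k)).ncard + (({j} : Set (Fin k))ᶜ).ncard = k := by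
        rw [Set.ncard_add_ncard_compl, Nat.card_eq_fintype_card, Fintype.card_fin]
      have h5 : ({j} : Set (Fin k)).ncard = 1 := Set.ncard_singleton j
      rw [he]; omega
    omega
  rw [Set.InjOn] at hninj
  push_neg at hninj
  obtain ⟨w, hw, w', hw', hfe, hne⟩ := hninj
  have hwL := (hfspec w hw).1
  have hw'L : w' ∈ L (f w) := by rw [hfe]; exact (hfspec w' hw').1
  -- symmetric construction
  have final : ∀ w₀ w₀' : V, w₀ ∈ S₁ ∩ S₂ → w₀' ∈ S₁ ∩ S₂ →
      (∃ (j' : Fin k) (u m v : List V), L j' = u ++ w₀ :: m ++ w₀' :: v) →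
      ∃ x' z', BadPair A L x' z' ∧
        ((coverSet L)ᶜ \ ReachX A (coverSet L) x').ncard
          < ((coverSet L)ᶜ \ ReachX A (coverSet L) x).ncard := by
    rintro w₀ w₀' hw₀ hw₀' hspl
    have hw₀2 : A w₀ y' := hw₀.2
    have hw₀'1 : A y w₀' := hw₀'.1
    refine ⟨w₀, w₀', ⟨hspl, ⟨y', hy'C, hw₀2⟩, ⟨y, hyC, hw₀'1⟩⟩, ?_⟩
    have hy'Rw : y' ∈ ReachX A C w₀ := ⟨y', hw₀2, hy'C, Relation.ReflTransGen.refl⟩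
    have hy'nRx : y' ∉ ReachX A C x := fun h => hdisjRC y' h hy'Co
    rcases reach_comp (C := C) hsc x w₀ with hsb | hsb
    · refine Set.ncard_lt_ncard ?_ (Set.toFinite _)
      constructor
      · exact Set.diff_subset_diff_right hsb
      · intro hss
        have : y' ∈ Cᶜ \ ReachX A C w₀ := hss ⟨hy'C, hy'nRx⟩
        exact this.2 hy'Rw
    · exact absurd (hsb hy'Rw) hy'nRx
  rcases two_mem_split hwL hw'L hne with ⟨u, m, v, hsp⟩ | ⟨u, m, v, hsp⟩
  · exact final w w' hw hw' ⟨f w, u, m, v, hsp⟩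
  · exact final w' w hw' hw ⟨f w, u, m, v, hsp⟩

lemma no_bad (hirr : Irreflexive A) (hsc : Semicomplete A)
    (hk : 2 ≤ k) (hcard : (9 * k) ^ 5 ≤ Fintype.card V)
    (hdeg : ∀ v : V, (Fintype.card V + k) / 2 ≤ {w : V | A v w}.ncard ∧
      (Fintype.card V + k) / 2 ≤ {w : V | A w v}.ncard)
    (hL : IsSTSystem A s t L)
    (hmax : ∀ P : Fin k → List V, IsSTSystem A s t P →
      (coverSet P).ncard ≤ (coverSet L).ncard) :
    ∀ x z : V, ¬ BadPair A L x z := by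
  have key : ∀ (n : ℕ) (x z : V),
      ((coverSet L)ᶜ \ ReachX A (coverSet L) x).ncard ≤ n → ¬ BadPair A L x z := by
    intro n
    induction n with
    | zero =>
      intro x z hm hbad
      obtain ⟨x', z', _, hlt⟩ := bad_step hirr hsc hk hcard hdeg hL hmax hbad
      omega
    | succ n ih =>
      intro x z hm hbad
      obtain ⟨x', z', hbad', hlt⟩ := bad_step hirr hsc hk hcard hdeg hL hmax hbad
      exact ih x' z' (by omega) hbad'
  exact fun x z => key _ x z le_rfl

end Lemmas

theorem stmt_6 {V : Type*} [Fintype V] (A : V → V → Prop)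
    (hirr : Irreflexive A) (hsc : Semicomplete A)
    (k : ℕ) (hk : 2 ≤ k)
    (hcard : (9 * k) ^ 5 ≤ Fintype.card V)
    (hdeg : ∀ v : V, (Fintype.card V + k) / 2 ≤ {w : V | A v w}.ncard ∧
      (Fintype.card V + k) / 2 ≤ {w : V | A w v}.ncard)
    (s : V) (t : Fin k → V) (htinj : Function.Injective t)
    (hst : ∀ i, t i ≠ s)
    (L : Fin k → List V) (hL : IsSTSystem A s t L)
    (hmax : ∀ P : Fin k → List V, IsSTSystem A s t P →
      (coverSet P).ncard ≤ (coverSet L).ncard)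
    (hncov : coverSet L ≠ Set.univ)
    (VH : Set V) (hVH : VH = (coverSet L)ᶜ)
    (F R : Set V)
    (hF : F = {x ∈ coverSet L | ∃ y ∈ VH, A y x})
    (hR : R = {x ∈ coverSet L | ∃ y ∈ VH, A x y}) :
    (F ∪ R).ncard = (coverSet L).ncard ∧ (F ∩ R).ncard ≤ k := by
  classical
  have hHne : ∃ h, h ∉ coverSet L := by
    by_contra hcon
    push_neg at hcon
    exact hncov (Set.eq_univ_of_forall hcon)
  obtain ⟨h0, hh0⟩ := hHne
  have hh0' : h0 ∈ VH := by rw [hVH]; exact hh0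
  have hFR : F ∪ R = coverSet L := by
    rw [hF, hR]; ext v
    constructor
    · rintro (⟨hv, -⟩ | ⟨hv, -⟩) <;> exact hv
    · intro hv
      have hne : v ≠ h0 := fun e => hh0 (e ▸ hv)
      rcases hsc v h0 hne with h1 | h1
      · exact Or.inr ⟨hv, h0, hh0', h1⟩
      · exact Or.inl ⟨hv, h0, hh0', h1⟩
  refine ⟨by rw [hFR], ?_⟩
  have hnb := no_bad hirr hsc hk hcard hdeg hL hmax
  have hFR' : ∀ v ∈ F ∩ R, v ∈ coverSet L ∧
      (∃ y, y ∉ coverSet L ∧ A v y) ∧ (∃ y, y ∉ coverSet L ∧ A y v) := by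
    rintro v ⟨hvF, hvR⟩
    rw [hF] at hvF; rw [hR] at hvR
    obtain ⟨hvc, yF, hyFH, hA⟩ := hvF
    obtain ⟨-, yR, hyRH, hA'⟩ := hvR
    rw [hVH] at hyFH hyRH
    exact ⟨hvc, ⟨yR, hyRH, hA'⟩, ⟨yF, hyFH, hA⟩⟩
  have hpair : ∀ (i : Fin k) v v', v ∈ F ∩ R → v' ∈ F ∩ R → v ≠ v' →
      v ∈ L i → v' ∈ L i → False := by
    intro i v v' hv hv' hne hvi hv'i
    obtain ⟨-, hvR, hvF⟩ := hFR' v hv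
    obtain ⟨-, hv'R, hv'F⟩ := hFR' v' hv'
    rcases two_mem_split hvi hv'i hne with ⟨u, m, w, hsp⟩ | ⟨u, m, w, hsp⟩
    · exact hnb v v' ⟨⟨i, u, m, w, hsp⟩, hvR, hv'F⟩
    · exact hnb v' v ⟨⟨i, u, m, w, hsp⟩, hv'R, hvF⟩
  have hsmem : ∀ i : Fin k, s ∈ L i := by
    intro i
    have hh := (hL.1 i).2.2.2.1
    cases hLi : L i with
    | nil => rw [hLi] at hh; simp at hh
    | cons a tl =>
      rw [hLi] at hh
      simp only [List.head?_cons, Option.some.injEq] at hh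
      rw [hh]; exact List.mem_cons_self
  by_cases hs : s ∈ F ∩ R
  · have hsub : F ∩ R ⊆ {s} := by
      intro v hv
      by_contra hvs
      have hvs' : v ≠ s := fun e => hvs (e ▸ rfl)
      obtain ⟨hvc, -, -⟩ := hFR' v hv
      obtain ⟨i, hvi⟩ := hvc
      exact hpair i s v hs hv (Ne.symm hvs') (hsmem i) hvi
    have := Set.ncard_le_ncard hsub (Set.toFinite _)
    rw [Set.ncard_singleton] at this
    omega
  · set g : V → Fin k := fun v => if hv : ∃ i, v ∈ L i then hv.choose
      else (⟨0, by omega⟩ : Fin k) with hg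
    have hgspec : ∀ v, v ∈ coverSet L → v ∈ L (g v) := by
      intro v hv
      have hv' : ∃ i, v ∈ L i := hv
      have : g v = hv'.choose := by rw [hg]; exact dif_pos hv'
      rw [this]; exact hv'.choose_spec
    have hginj : Set.InjOn g (F ∩ R) := by
      intro v hv v' hv' he
      by_contra hne
      exact hpair (g v) v v' hv hv' hne (hgspec v (hFR' v hv).1)
        (he ▸ hgspec v' (hFR' v' hv').1)
    calc (F ∩ R).ncard = (g '' (F ∩ R)).ncard := (Set.ncard_image_of_injOn hginj).symm
      _ ≤ (Set.univ : Set (Fin k)).ncard :=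
          Set.ncard_le_ncard (Set.subset_univ _) (Set.toFinite _)
      _ = k := by rw [Set.ncard_univ, Nat.card_eq_fintype_card, Fintype.card_fin]
end
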